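/- arXiv:math/0403171 — 8 statements merged into one kernel-verified Lean document; each statement's English description precedes it below -/
import Mathlib

section
/- Let V be a finite-dimensional real vector space with dual space V∨, T > 0, and let α ∈ V, α∨ ∈ V∨ satisfy α∨(α) = 2. For every continuous path π : [0,T] → V with π(0) = 0: (a) α∨((P_α π)(t)) ≥ 0 for all t ∈ [0,T]; and (b) P_α π = π if and only if α∨(π(t)) ≥ 0 for all t ∈ [0,T]. -/
/-- The Pitman transform associated with a pair `(α, α∨)`:
`P_α π (t) = π t − (inf_{0 ≤ s ≤ t} α∨(π s)) • α`. -/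
noncomputable def pitman {V : Type*} [AddCommGroup V] [Module ℝ V]
    (α : V) (αv : Module.Dual ℝ V) (π : ℝ → V) : ℝ → V :=
  fun t => π t - sInf ((fun s => αv (π s)) '' Set.Icc 0 t) • α

theorem pitman_nonneg_and_fixed_iff
    {V : Type*} [NormedAddCommGroup V] [NormedSpace ℝ V] [FiniteDimensional ℝ V]
    (T : ℝ) (hT : 0 < T) (α : V) (αv : Module.Dual ℝ V) (hpair : αv α = 2)
    (π : ℝ → V) (hcont : ContinuousOn π (Set.Icc 0 T)) (h0 : π 0 = 0) :
    (∀ t ∈ Set.Icc 0 T, 0 ≤ αv (pitman α αv π t)) ∧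
    ((∀ t ∈ Set.Icc 0 T, pitman α αv π t = π t) ↔
      ∀ t ∈ Set.Icc 0 T, 0 ≤ αv (π t)) := by
  have hαvc : Continuous (αv : V → ℝ) := αv.continuous_of_finiteDimensional
  -- basic facts about the sliding infimum
  have key : ∀ t ∈ Set.Icc (0:ℝ) T,
      BddBelow ((fun s => αv (π s)) '' Set.Icc 0 t) ∧
      (0:ℝ) ∈ ((fun s => αv (π s)) '' Set.Icc 0 t) := by
    intro t ht
    obtain ⟨ht0, htT⟩ := ht
    have hsub : Set.Icc (0:ℝ) t ⊆ Set.Icc 0 T := Set.Icc_subset_Icc le_rfl htT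
    have hc : IsCompact ((fun s => αv (π s)) '' Set.Icc 0 t) :=
      (isCompact_Icc).image_of_continuousOn
        ((hαvc.comp_continuousOn (hcont.mono hsub)))
    refine ⟨hc.bddBelow, ⟨0, ⟨le_rfl, ht0⟩, by simp [h0]⟩⟩
  have hinf_le0 : ∀ t ∈ Set.Icc (0:ℝ) T,
      sInf ((fun s => αv (π s)) '' Set.Icc 0 t) ≤ 0 := by
    intro t ht
    obtain ⟨hb, h0mem⟩ := key t ht
    exact csInf_le hb h0mem
  have hinf_le_self : ∀ t ∈ Set.Icc (0:ℝ) T,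
      sInf ((fun s => αv (π s)) '' Set.Icc 0 t) ≤ αv (π t) := by
    intro t ht
    obtain ⟨hb, _⟩ := key t ht
    exact csInf_le hb ⟨t, ⟨ht.1, le_rfl⟩, rfl⟩
  have hne : α ≠ 0 := by
    intro h; rw [h] at hpair; simp at hpair
  constructor
  · intro t ht
    have h1 := hinf_le0 t ht
    have h2 := hinf_le_self t ht
    simp only [pitman, map_sub, map_smul, smul_eq_mul, hpair]
    nlinarith
  · constructor
    · intro hfix t ht
      have heq : π t - sInf ((fun s => αv (π s)) '' Set.Icc 0 t) • α = π t :=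
        hfix t ht
      have hm : sInf ((fun s => αv (π s)) '' Set.Icc 0 t) • α = 0 := by
        have := sub_eq_self.mp heq
        exact this
      have hm0 : sInf ((fun s => αv (π s)) '' Set.Icc 0 t) = 0 :=
        (smul_eq_zero.mp hm).resolve_right hne
      have := hinf_le_self t ht
      linarith
    · intro hpos t ht
      have h1 := hinf_le0 t ht
      have h2 : 0 ≤ sInf ((fun s => αv (π s)) '' Set.Icc 0 t) := by
        refine le_csInf ⟨0, (key t ht).2⟩ ?_
        rintro x ⟨s, hs, rfl⟩
        exact hpos s ⟨hs.1, hs.2.trans ht.2⟩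
      have : sInf ((fun s => αv (π s)) '' Set.Icc 0 t) = 0 := le_antisymm h1 h2
      simp [pitman, this]
end

section
/- Let V be a finite-dimensional real vector space with dual space V∨, T > 0, and let α ∈ V, α∨ ∈ V∨ satisfy α∨(α) = 2. The Pitman transform P_α is idempotent: for every continuous path π : [0,T] → V with π(0) = 0, one has P_α(P_α π) = P_α π. -/
/-- The Pitman transform is an idempotent: `P_α (P_α π) = P_α π`. -/
theorem pitman_idempotent
    {V : Type*} [NormedAddCommGroup V] [NormedSpace ℝ V] [FiniteDimensional ℝ V]
    (T : ℝ) (hT : 0 < T) (α : V) (αv : Module.Dual ℝ V) (hpair : αv α = 2)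
    (π : ℝ → V) (hcont : ContinuousOn π (Set.Icc 0 T)) (h0 : π 0 = 0) :
    ∀ t ∈ Set.Icc 0 T, pitman α αv (pitman α αv π) t = pitman α αv π t := by
  intro t ht
  set f : ℝ → ℝ := fun s => αv (π s) with hf
  set m : ℝ → ℝ := fun s => sInf (f '' Set.Icc 0 s) with hm
  have hfc : ContinuousOn f (Set.Icc 0 T) :=
    (LinearMap.continuous_of_finiteDimensional αv).comp_continuousOn hcont
  have hf0 : f 0 = 0 := by simp [hf, h0]
  -- basic facts about m
  have hm_le : ∀ s ∈ Set.Icc (0:ℝ) T, ∀ u ∈ Set.Icc (0:ℝ) s, m s ≤ f u := by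
    intro s hs u hu
    have hsub : Set.Icc (0:ℝ) s ⊆ Set.Icc 0 T := Set.Icc_subset_Icc le_rfl hs.2
    have hbdd : BddBelow (f '' Set.Icc 0 s) :=
      (isCompact_Icc.image_of_continuousOn (hfc.mono hsub)).bddBelow
    exact csInf_le hbdd ⟨u, hu, rfl⟩
  have hm0 : m 0 = 0 := by
    simp [hm, Set.Icc_self, hf0]
  have hm_nonpos : ∀ s ∈ Set.Icc (0:ℝ) T, m s ≤ 0 := by
    intro s hs
    have := hm_le s hs 0 ⟨le_rfl, hs.1⟩
    simpa [hf0] using this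
  -- the key function g
  have hg : ∀ s, αv (pitman α αv π s) = f s - m s * 2 := by
    intro s
    simp [pitman, hf, hm, hpair, map_smul, smul_eq_mul]
  -- the inner inf of the second application is 0
  have key : sInf ((fun s => αv (pitman α αv π s)) '' Set.Icc 0 t) = 0 := by
    have hmem : (0:ℝ) ∈ (fun s => αv (pitman α αv π s)) '' Set.Icc 0 t := by
      refine ⟨0, ⟨le_rfl, ht.1⟩, ?_⟩
      show αv (pitman α αv π 0) = 0
      rw [hg 0, hf0, hm0]; ring
    have hlb : ∀ x ∈ (fun s => αv (pitman α αv π s)) '' Set.Icc 0 t, (0:ℝ) ≤ x := by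
      rintro x ⟨s, hs, rfl⟩
      have hsT : s ∈ Set.Icc (0:ℝ) T := ⟨hs.1, hs.2.trans ht.2⟩
      have h1 : m s ≤ f s := hm_le s hsT s ⟨hsT.1, le_rfl⟩
      have h2 : m s ≤ 0 := hm_nonpos s hsT
      show (0:ℝ) ≤ αv (pitman α αv π s)
      rw [hg s]; linarith
    exact le_antisymm (csInf_le ⟨0, hlb⟩ hmem) (le_csInf ⟨0, hmem⟩ hlb)
  show pitman α αv π t - _ • α = _
  rw [key, zero_smul, sub_zero]
end

section
/- Let V be a finite-dimensional real vector space with dual space V∨, T > 0, and let α ∈ V, α∨ ∈ V∨ satisfy α∨(α) = 2. (a) For every continuous path π : [0,T] → V with π(0) = 0, the number x := −inf_{0≤t≤T} α∨(π(t)) satisfies 0 ≤ x ≤ α∨((P_α π)(T)). (b) Conversely, let η : [0,T] → V be continuous with η(0) = 0 and α∨(η(t)) ≥ 0 for all t ∈ [0,T], and let x ∈ [0, α∨(η(T))]. Then there exists a unique continuous path π : [0,T] → V with π(0) = 0 such that P_α π = η and −inf_{0≤t≤T} α∨(π(t)) = x; moreover this π is given by π(t) = η(t) − min( x , inf_{t≤s≤T}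 α∨(η(s)) ) · α. -/
/-!
Write `h = α∨ ∘ η` and `F t = inf_{[t,T]} h`. The candidate path has `α∨ ∘ π = h - 2 min(x, F)`,
and its running infimum up to `t` is `-min(x, F t)`: this is a lower bound because `min(x, F)` is
nondecreasing and below `h`, and it is attained at the last time before `t` at which `h` equals
`min(x, F t)`. Conversely, if `P_α π = η` then `α∨ ∘ η = α∨ ∘ π - 2 I` with `I` the running
infimum of `α∨ ∘ π`, and `-I t = min(-I T, F t)`: if `I` drops after `t`, then at the first time
`w ≥ t` at which `α∨ ∘ π` comes back down to `I t`, one has `α∨ (η w) = -I t`.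
-/

open Set

namespace ContinuousOn

variable {p : ℝ → ℝ} {a b t c : ℝ}

theorem exists_first_hit (hp : ContinuousOn p (Icc a b)) (ht : t ∈ Icc a b)
    (hle : ∀ s ∈ Icc a t, c ≤ p s) (hb : p b ≤ c) :
    ∃ w ∈ Icc t b, p w = c ∧ ∀ s ∈ Icc a w, c ≤ p s := by
  set S := Icc t b ∩ p ⁻¹' Iic c
  have hS : IsClosed S :=
    (hp.mono (Icc_subset_Icc_left ht.1)).preimage_isClosed_of_isClosed isClosed_Icc isClosed_Iic
  have hbS : b ∈ S := ⟨⟨ht.2, le_rfl⟩, hb⟩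
  have hw : sInf S ∈ S := hS.csInf_mem ⟨b, hbS⟩ ⟨t, fun s hs => hs.1.1⟩
  set w := sInf S
  have hS_le : ∀ s ∈ S, w ≤ s := fun s hs => csInf_le ⟨t, fun s hs => hs.1.1⟩ hs
  have hpw : p w = c := by
    refine le_antisymm hw.2 (not_lt.1 fun hlt => ?_)
    have htw : t ≤ w := hw.1.1
    -- `p` crosses the level `c` on `[t, w]`, at a point of `S` that must be `w` itself
    obtain ⟨s, hs, hps⟩ := intermediate_value_Icc' htw (hp.mono (Icc_subset_Icc ht.1 hw.1.2))
      ⟨hlt.le, hle t ⟨ht.1, le_rfl⟩⟩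
    have hws : w ≤ s := hS_le s ⟨⟨hs.1, hs.2.trans hw.1.2⟩, hps.le⟩
    rw [le_antisymm hs.2 hws] at hps
    exact hlt.ne hps
  refine ⟨w, hw.1, hpw, fun s hs => not_lt.1 fun hlt => ?_⟩
  rcases le_total s t with hst | hts
  · exact (hle s ⟨hs.1, hst⟩).not_gt hlt
  · have hws : w ≤ s := hS_le s ⟨⟨hts, hs.2.trans hw.1.2⟩, hlt.le⟩
    rw [← le_antisymm hs.2 hws] at hpw
    exact hlt.ne hpw

theorem exists_last_hit (hp : ContinuousOn p (Icc a b)) (ht : t ∈ Icc a b)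
    (hle : ∀ s ∈ Icc t b, c ≤ p s) (ha : p a ≤ c) :
    ∃ u ∈ Icc a t, p u = c ∧ ∀ s ∈ Icc u b, c ≤ p s := by
  have hneg : MapsTo Neg.neg (Icc (-b) (-a)) (Icc a b) := fun s hs =>
    ⟨le_neg_of_le_neg hs.2, neg_le_of_neg_le hs.1⟩
  obtain ⟨w, hw, hpw, hlew⟩ := (hp.comp continuousOn_neg hneg).exists_first_hit (t := -t)
    ⟨neg_le_neg ht.2, neg_le_neg ht.1⟩
    (fun s hs => hle (-s) ⟨le_neg_of_le_neg hs.2, neg_le_of_neg_le hs.1⟩)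
    (by simpa using ha)
  refine ⟨-w, ⟨le_neg_of_le_neg hw.2, neg_le_of_neg_le hw.1⟩, hpw, fun s hs => ?_⟩
  simpa using hlew (-s) ⟨neg_le_neg hs.2, neg_le.1 hs.1⟩

theorem continuousOn_sInf_image_Icc_left (hp : ContinuousOn p (Icc a b)) :
    ContinuousOn (fun t => sInf (p '' Icc t b)) (Icc a b) := by
  rcases lt_or_ge b a with hba | hab
  · simp [Icc_eq_empty_of_lt hba]
  -- extend `p` continuously to `ℝ`, then take the infimum of `s ↦ p (max s t)` over `[a, b]`
  set H := IccExtend hab ((Icc a b).domRestrict p)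
  have hH : Continuous H := continuous_IccExtend_iff.2 hp.domRestrict
  have hinf : Continuous fun t => sInf ((fun s => H (max s t)) '' Icc a b) :=
    isCompact_Icc.continuous_sInf (hH.comp (continuous_snd.max continuous_fst))
  refine hinf.continuousOn.congr fun t ht => congrArg sInf ?_
  have hHp : EqOn H p (Icc t b) := fun s hs =>
    IccExtend_of_mem hab _ ⟨ht.1.trans hs.1, hs.2⟩
  rw [← hHp.image_eq]
  ext y
  constructor
  · rintro ⟨s, hs, rfl⟩
    exact ⟨s, ⟨ht.1.trans hs.1, hs.2⟩, congrArg H (max_eq_left hs.1)⟩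
  · rintro ⟨s, hs, rfl⟩
    exact ⟨max s t, ⟨le_max_right _ _, max_le hs.2 ht.2⟩, rfl⟩

theorem sInf_image_Icc_le_sInf_image (hp : ContinuousOn p (Icc a b)) {s : Set ℝ}
    (hs : s.Nonempty) (hsub : s ⊆ Icc a b) : sInf (p '' Icc a b) ≤ sInf (p '' s) :=
  csInf_le_csInf (isCompact_Icc.image_of_continuousOn hp).bddBelow (hs.image p) (image_mono hsub)

end ContinuousOn

theorem sInf_image_Icc_sub_two_mul_min {h : ℝ → ℝ} {T x t : ℝ} (hh : ContinuousOn h (Icc 0 T))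
    (h0 : h 0 = 0) (hpos : ∀ s ∈ Icc 0 T, 0 ≤ h s) (hx : 0 ≤ x) (ht : t ∈ Icc 0 T) :
    sInf ((fun s => h s - 2 * min x (sInf (h '' Icc s T))) '' Icc 0 t) =
      -min x (sInf (h '' Icc t T)) := by
  set F : ℝ → ℝ := fun s => sInf (h '' Icc s T)
  have hF_le : ∀ s ∈ Icc 0 T, F s ≤ h s := fun s hs =>
    (hh.mono (Icc_subset_Icc_left hs.1)).sInf_image_Icc_le ⟨le_rfl, hs.2⟩
  have hF_mono : ∀ s ∈ Icc 0 t, F s ≤ F t := fun s hs =>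
    (hh.mono (Icc_subset_Icc_left hs.1)).sInf_image_Icc_le_sInf_image (nonempty_Icc.2 ht.2)
      (Icc_subset_Icc_left hs.2)
  set c := min x (F t)
  have hc_nonneg : 0 ≤ c := le_min hx <| le_csInf ((nonempty_Icc.2 ht.2).image h)
    (forall_mem_image.2 fun s hs => hpos s ⟨ht.1.trans hs.1, hs.2⟩)
  refine IsLeast.csInf_eq ⟨?_, forall_mem_image.2 fun s hs => ?_⟩
  · -- the last time before `t` at which `h` equals `c` has future infimum `c`
    obtain ⟨u, hu, hhu, hle⟩ := hh.exists_last_hit ht (fun s hs => (min_le_right _ _).trans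
      ((hh.mono (Icc_subset_Icc_left ht.1)).sInf_image_Icc_le hs)) (h0.trans_le hc_nonneg)
    have hu' : u ∈ Icc 0 T := ⟨hu.1, hu.2.trans ht.2⟩
    have hFu : F u = c := le_antisymm ((hF_le u hu').trans hhu.le)
      (le_csInf ((nonempty_Icc.2 hu'.2).image h) (forall_mem_image.2 hle))
    refine ⟨u, hu, ?_⟩
    show h u - 2 * min x (F u) = -c
    rw [hFu, hhu, min_eq_right (min_le_left _ _)]
    ring
  · have hs' : s ∈ Icc 0 T := ⟨hs.1, hs.2.trans ht.2⟩
    have hgs : min x (F s) ≤ min x (F t) := min_le_min_left x (hF_mono s hs)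
    show -c ≤ h s - 2 * min x (F s)
    linarith [(min_le_right x (F s)).trans (hF_le s hs')]

theorem min_neg_sInf_image_Icc {p h : ℝ → ℝ} {T t : ℝ} (hp : ContinuousOn p (Icc 0 T))
    (hh : ∀ s ∈ Icc 0 T, h s = p s - 2 * sInf (p '' Icc 0 s)) (ht : t ∈ Icc 0 T) :
    min (-sInf (p '' Icc 0 T)) (sInf (h '' Icc t T)) = -sInf (p '' Icc 0 t) := by
  set f : ℝ → ℝ := fun s => sInf (p '' Icc 0 s)
  have hp_le : ∀ s ∈ Icc 0 T, ∀ r ∈ Icc 0 s, f s ≤ p r := fun s hs r hr =>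
    (hp.mono (Icc_subset_Icc_right hs.2)).sInf_image_Icc_le hr
  have hf_anti : ∀ s ∈ Icc 0 T, t ≤ s → f s ≤ f t := fun s hs hts =>
    (hp.mono (Icc_subset_Icc_right hs.2)).sInf_image_Icc_le_sInf_image (nonempty_Icc.2 ht.1)
      (Icc_subset_Icc_right hts)
  have hT : T ∈ Icc 0 T := ⟨ht.1.trans ht.2, le_rfl⟩
  have hh_ge : ∀ s ∈ Icc t T, -f t ≤ h s := fun s hs => by
    have hs' : s ∈ Icc 0 T := ⟨ht.1.trans hs.1, hs.2⟩
    rw [hh s hs']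
    linarith [hp_le s hs' s ⟨hs'.1, le_rfl⟩, hf_anti s hs' hs.1]
  refine le_antisymm ?_ (le_min (neg_le_neg (hf_anti T hT ht.2))
    (le_csInf ((nonempty_Icc.2 ht.2).image h) (forall_mem_image.2 hh_ge)))
  rcases (hf_anti T hT ht.2).eq_or_lt with hfT | hfT
  · exact (min_le_left _ _).trans_eq (congrArg Neg.neg hfT)
  -- the running infimum drops after `t`, so `p` comes back down to `f t` at some `w ≥ t`
  obtain ⟨v, hv, hpv⟩ := isCompact_Icc.exists_sInf_image_eq (nonempty_Icc.2 hT.1) hp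
  change f T = p v at hpv
  rw [hpv] at hfT
  have htv : t ≤ v := not_lt.1 fun hvt => (hp_le t ht v ⟨hv.1, hvt.le⟩).not_gt hfT
  obtain ⟨w, hw, hpw, hle⟩ := (hp.mono (Icc_subset_Icc_right hv.2)).exists_first_hit
    ⟨ht.1, htv⟩ (hp_le t ht) hfT.le
  have hw' : w ∈ Icc 0 T := ⟨ht.1.trans hw.1, hw.2.trans hv.2⟩
  have hfw : f w = f t := le_antisymm (hpw ▸ hp_le w hw' w ⟨hw'.1, le_rfl⟩)
    (le_csInf ((nonempty_Icc.2 hw'.1).image p) (forall_mem_image.2 hle))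
  calc min _ _ ≤ sInf (h '' Icc t T) := min_le_right _ _
    _ ≤ h w := csInf_le ⟨-f t, forall_mem_image.2 hh_ge⟩ ⟨w, ⟨hw.1, hw'.2⟩, rfl⟩
    _ = -f t := by rw [hh w hw']; change p w - 2 * f w = _; rw [hpw, hfw]; ring

theorem dual_pitman_apply {V : Type*} [AddCommGroup V] [Module ℝ V] {α : V}
    {αv : Module.Dual ℝ V} (hpair : αv α = 2) (π : ℝ → V) (t : ℝ) :
    αv (pitman α αv π t) = αv (π t) - 2 * sInf ((fun s => αv (π s)) '' Icc 0 t) := by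
  rw [pitman, map_sub, map_smul, hpair, smul_eq_mul, mul_comm]

/-- Proposition 2.2 (iv) of Biane–Bougerol–O'Connell:
(a) for a path `π`, the number `x = −inf_{[0,T]} α∨(π)` lies in `[0, α∨(P_α π (T))]`;
(b) conversely, given a path `η` with `η 0 = 0`, `α∨(η t) ≥ 0` on `[0,T]`, and
`x ∈ [0, α∨(η T)]`, there is a unique path `π` with `P_α π = η` and
`−inf_{[0,T]} α∨(π) = x`, given by `π t = η t − min(x, inf_{t ≤ s ≤ T} α∨(η s)) • α`. -/
theorem pitman_inverse
    {V : Type*} [NormedAddCommGroup V] [NormedSpace ℝ V] [FiniteDimensional ℝ V]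
    (T : ℝ) (hT : 0 < T) (α : V) (αv : Module.Dual ℝ V) (hpair : αv α = 2) :
    (∀ π : ℝ → V, ContinuousOn π (Set.Icc 0 T) → π 0 = 0 →
      0 ≤ -sInf ((fun s => αv (π s)) '' Set.Icc 0 T) ∧
      -sInf ((fun s => αv (π s)) '' Set.Icc 0 T) ≤ αv (pitman α αv π T)) ∧
    (∀ η : ℝ → V, ContinuousOn η (Set.Icc 0 T) → η 0 = 0 →
      (∀ t ∈ Set.Icc 0 T, 0 ≤ αv (η t)) →
      ∀ x ∈ Set.Icc 0 (αv (η T)),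
      (ContinuousOn (fun t => η t - min x (sInf ((fun s => αv (η s)) '' Set.Icc t T)) • α)
          (Set.Icc 0 T) ∧
        (fun t => η t - min x (sInf ((fun s => αv (η s)) '' Set.Icc t T)) • α) 0 = 0 ∧
        (∀ t ∈ Set.Icc 0 T,
          pitman α αv
            (fun t => η t - min x (sInf ((fun s => αv (η s)) '' Set.Icc t T)) • α) t = η t) ∧
        -sInf ((fun t => αv (η t - min x (sInf ((fun s => αv (η s)) '' Set.Icc t T)) • α)) ''
            Set.Icc 0 T) = x) ∧
      (∀ π : ℝ → V, ContinuousOn π (Set.Icc 0 T) → π 0 = 0 →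
        (∀ t ∈ Set.Icc 0 T, pitman α αv π t = η t) →
        -sInf ((fun s => αv (π s)) '' Set.Icc 0 T) = x →
        ∀ t ∈ Set.Icc 0 T,
          π t = η t - min x (sInf ((fun s => αv (η s)) '' Set.Icc t T)) • α)) := by
  have hαv : Continuous αv := αv.continuous_of_finiteDimensional
  have hT' : T ∈ Icc 0 T := ⟨hT.le, le_rfl⟩
  refine ⟨fun π hπ hπ0 => ?_, fun η hη hη0 hpos x hx => ?_⟩
  · have hp := hαv.comp_continuousOn hπ
    have h0 := hp.sInf_image_Icc_le (left_mem_Icc.2 hT.le)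
    have hTinf := hp.sInf_image_Icc_le hT'
    simp only [Function.comp_apply, hπ0, map_zero] at h0 hTinf
    rw [dual_pitman_apply hpair]
    constructor <;> linarith
  set h : ℝ → ℝ := fun s => αv (η s)
  have hh : ContinuousOn h (Icc 0 T) := hαv.comp_continuousOn hη
  have hinf : ∀ t ∈ Icc 0 T,
      sInf ((fun s => αv (η s - min x (sInf (h '' Icc s T)) • α)) '' Icc 0 t) =
        -min x (sInf (h '' Icc t T)) := fun t ht => by
    simpa only [map_sub, map_smul, hpair, smul_eq_mul, mul_comm _ (2 : ℝ)] using
      sInf_image_Icc_sub_two_mul_min hh (by simp [h, hη0]) hpos hx.1 ht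
  refine ⟨⟨?_, ?_, fun t ht => ?_, ?_⟩, fun π hπ _ hPπ hπx t ht => ?_⟩
  · exact hη.sub ((continuousOn_const.inf hh.continuousOn_sInf_image_Icc_left).smul
      continuousOn_const)
  · have hF0 : sInf (h '' Icc 0 T) = 0 :=
      IsLeast.csInf_eq ⟨⟨0, left_mem_Icc.2 hT.le, by simp [h, hη0]⟩, forall_mem_image.2 hpos⟩
    show η 0 - min x (sInf (h '' Icc 0 T)) • α = 0
    rw [hF0, min_eq_right hx.1, zero_smul, hη0, sub_zero]
  · rw [pitman, hinf t ht, neg_smul, sub_neg_eq_add, sub_add_cancel]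
  · rw [hinf T hT', neg_neg, Icc_self, image_singleton, csInf_singleton, min_eq_left hx.2]
  · have hh_eq : ∀ s ∈ Icc 0 T, h s = αv (π s) - 2 * sInf ((fun r => αv (π r)) '' Icc 0 s) :=
      fun s hs => by rw [← dual_pitman_apply hpair, hPπ s hs]
    have hmin :=
      min_neg_sInf_image_Icc (p := fun s => αv (π s)) (hαv.comp_continuousOn hπ) hh_eq ht
    rw [hπx] at hmin
    rw [hmin, ← hPπ t ht, pitman, neg_smul, sub_neg_eq_add, sub_add_cancel]
end

section
/- Chebyshev formula for iterated Pitman transforms: let V be a finite-dimensional real vector space with dual V∨, T > 0, and let α, β ∈ V and α∨, β∨ ∈ V∨ satisfy α∨(α) = β∨(β) = 2 and α∨(β) = β∨(α) = −2ρ with ρ > 0. Let n ≥ 1 be an integer with ρ ≥ cos(π/n). Then for every continuous path π : [0,T] → V with π(0) = 0 and every t ∈ [0,T]: (P_α P_β P_α ⋯ π)(t) (n alternating factors, the rightmost applied first) equals π(t) − [ inf over t ≥ s_0 ≥ s_1 ≥ ⋯ ≥ s_{n−1} ≥ 0 of Σ_{i=0}^{n−1} U_i(ρ) Z^{(i)}(s_i)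 ] · α − [ inf over t ≥ s_0 ≥ s_1 ≥ ⋯ ≥ s_{n−2} ≥ 0 of Σ_{i=0}^{n−2} U_i(ρ) Z^{(i+1)}(s_i) ] · β, where X(s) = α∨(π(s)), Y(s) = β∨(π(s)), Z^{(k)} = X for k even and Z^{(k)} = Y for k odd (for n = 1 the β-term, an infimum over an empty family of indices, is omitted). -/
/-- `altComp P Q n` is the alternating composition `P ∘ Q ∘ P ∘ ⋯` with `n` factors. -/
def altComp {X : Type*} (P Q : X → X) : ℕ → (X → X)
  | 0 => id
  | n + 1 => P ∘ altComp Q P n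

namespace PitmanChebyshev

open Set

section Infima

variable {α β : Type*}

theorem bddBelow_image_add {S : Set α} {f g : α → ℝ} (hf : BddBelow (f '' S))
    (hg : BddBelow (g '' S)) : BddBelow ((fun u => f u + g u) '' S) :=
  (hf.add hg).mono <| image_subset_iff.2 fun _ hu =>
    add_mem_add (mem_image_of_mem f hu) (mem_image_of_mem g hu)

theorem sInf_image_const_add {S : Set α} {g : α → ℝ} (hS : S.Nonempty)
    (hg : BddBelow (g '' S)) (c : ℝ) :
    sInf ((fun u => c + g u) '' S) = c + sInf (g '' S) := by
  rw [← image_image (c + ·) g S]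
  exact ((OrderIso.addLeft c).map_csInf' (hS.image g) hg).symm

theorem sInf_image_const_mul {S : Set α} {g : α → ℝ} {c : ℝ} (hc : 0 ≤ c) :
    sInf ((fun u => c * g u) '' S) = c * sInf (g '' S) := by
  rw [← smul_eq_mul, ← Real.sInf_smul_of_nonneg hc, ← image_smul, image_image]
  rfl

theorem le_sInf_image_add_sInf_iff {I : Set α} {K : α → Set β} {L : Set β}
    {A : α → ℝ} {B : β → ℝ} {c : ℝ} (hI : I.Nonempty) (hK : ∀ a ∈ I, (K a).Nonempty)
    (hKL : ∀ a ∈ I, K a ⊆ L) (hA : BddBelow (A '' I)) (hB : BddBelow (B '' L)) :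
    c ≤ sInf ((fun a => A a + sInf (B '' K a)) '' I) ↔ ∀ a ∈ I, ∀ b ∈ K a, c ≤ A a + B b := by
  have hBK : ∀ a ∈ I, BddBelow (B '' K a) := fun a ha => hB.mono (image_mono (hKL a ha))
  obtain ⟨CA, hCA⟩ := hA
  obtain ⟨CB, hCB⟩ := hB
  have hbdd : BddBelow ((fun a => A a + sInf (B '' K a)) '' I) :=
    ⟨CA + CB, forall_mem_image.2 fun a ha => add_le_add (hCA (mem_image_of_mem _ ha))
      (le_csInf ((hK a ha).image B) (forall_mem_image.2 fun b hb =>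
        hCB (mem_image_of_mem _ (hKL a ha hb))))⟩
  rw [le_csInf_iff hbdd (hI.image _), forall_mem_image]
  refine forall₂_congr fun a ha => ?_
  rw [← sub_le_iff_le_add', le_csInf_iff (hBK a ha) ((hK a ha).image B), forall_mem_image]
  simp only [sub_le_iff_le_add']

theorem sInf_Icc_add_sInf_Icc_comm {A B : ℝ → ℝ} {x : ℝ} (hx : 0 ≤ x)
    (hA : BddBelow (A '' Icc 0 x)) (hB : BddBelow (B '' Icc 0 x)) :
    sInf ((fun σ => A σ + sInf (B '' Icc 0 σ)) '' Icc 0 x)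
      = sInf ((fun s => B s + sInf (A '' Icc s x)) '' Icc 0 x) := by
  refine eq_of_forall_le_iff fun c => ?_
  rw [le_sInf_image_add_sInf_iff (nonempty_Icc.2 hx) (fun σ hσ => nonempty_Icc.2 hσ.1)
      (fun σ hσ => Icc_subset_Icc_right hσ.2) hA hB,
    le_sInf_image_add_sInf_iff (nonempty_Icc.2 hx) (fun s hs => nonempty_Icc.2 hs.2)
      (fun s hs => Icc_subset_Icc_left hs.1) hB hA]
  constructor
  · intro h s hs σ hσ
    rw [add_comm]
    exact h σ ⟨hs.1.trans hσ.1, hσ.2⟩ s ⟨hs.1, hσ.1⟩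
  · intro h σ hσ s hs
    rw [add_comm]
    exact h s ⟨hs.1, hs.2.trans hσ.2⟩ σ ⟨hs.2, hσ.2⟩

end Infima

noncomputable def runningInf (Y : ℝ → ℝ) (x : ℝ) : ℝ := sInf (Y '' Icc 0 x)

section RunningInf

variable {Y : ℝ → ℝ} {s x : ℝ}

theorem runningInf_le (hY : ContinuousOn Y (Icc 0 x)) (hx : 0 ≤ x) :
    runningInf Y x ≤ Y x :=
  hY.sInf_image_Icc_le (right_mem_Icc.2 hx)

theorem runningInf_anti (hY : ContinuousOn Y (Icc 0 x)) (hs : 0 ≤ s) (hsx : s ≤ x) :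
    runningInf Y x ≤ runningInf Y s :=
  csInf_le_csInf (isCompact_Icc.bddBelow_image hY) ((nonempty_Icc.2 hs).image _)
    (image_mono (Icc_subset_Icc_right hsx))

theorem runningInf_eq_min (hY : ContinuousOn Y (Icc 0 x)) (hs : 0 ≤ s) (hsx : s ≤ x) :
    runningInf Y x = min (runningInf Y s) (sInf (Y '' Icc s x)) := by
  rw [runningInf, ← Icc_union_Icc_eq_Icc hs hsx, image_union]
  exact csInf_union (isCompact_Icc.bddBelow_image (hY.mono (Icc_subset_Icc_right hsx)))
    ((nonempty_Icc.2 hs).image _)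
    (isCompact_Icc.bddBelow_image (hY.mono (Icc_subset_Icc_left hs)))
    ((nonempty_Icc.2 hsx).image _)

theorem runningInf_continuousOn (hY : ContinuousOn Y (Icc 0 x)) :
    ContinuousOn (runningInf Y) (Icc 0 x) := by
  rcases lt_or_ge x 0 with hx | hx
  · simp [Icc_eq_empty_of_lt hx]
  -- `runningInf Y y` is the infimum of `u ↦ Y (u * y)` over `[0, 1]`, after extending `Y`
  -- continuously beyond `[0, x]`.
  set Y' : ℝ → ℝ := fun u => Y (projIcc 0 x hx u)
  have hY' : Continuous Y' :=
    hY.comp_continuous (continuous_subtype_val.comp continuous_projIcc) fun u =>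
      (projIcc 0 x hx u).2
  refine (isCompact_Icc.continuous_sInf (K := Icc (0 : ℝ) 1)
    (f := fun y u => Y' (u * y)) (by fun_prop)).continuousOn.congr fun y hy => ?_
  change sInf (Y '' Icc 0 y) = sInf ((fun u => Y' (u * y)) '' Icc 0 1)
  rw [← image_image Y' (· * y), image_mul_right_Icc zero_le_one hy.1, zero_mul, one_mul]
  exact congrArg sInf (image_congr fun u hu => by
    simp [Y', projIcc_of_mem hx ⟨hu.1, hu.2.trans hy.2⟩])

theorem exists_hitting_runningInf (hY : ContinuousOn Y (Icc 0 x)) (hs : 0 ≤ s) (hsx : s ≤ x)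
    (hlt : sInf (Y '' Icc s x) < runningInf Y s) :
    ∃ σ ∈ Icc s x, Y σ = runningInf Y s ∧ runningInf Y σ = runningInf Y s := by
  set L := runningInf Y s
  set S := {σ ∈ Icc s x | Y σ ≤ L}
  have hYsx : ContinuousOn Y (Icc s x) := hY.mono (Icc_subset_Icc_left hs)
  have hSne : S.Nonempty := by
    obtain ⟨_, ⟨σ, hσ, rfl⟩, hσL⟩ := exists_lt_of_csInf_lt ((nonempty_Icc.2 hsx).image Y) hlt
    exact ⟨σ, hσ, hσL.le⟩
  have hσS : sInf S ∈ S :=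
    (isClosed_Icc.isClosed_le hYsx continuousOn_const).csInf_mem hSne ⟨s, fun _ h => h.1.1⟩
  set σ := sInf S
  have hσx : σ ∈ Icc s x := hσS.1
  have hYσ : ContinuousOn Y (Icc 0 σ) := hY.mono (Icc_subset_Icc_right hσx.2)
  have hbefore : ∀ τ ∈ Ico s σ, L ≤ Y τ := fun τ hτ => not_lt.1 fun hτL =>
    hτ.2.not_ge (csInf_le ⟨s, fun _ h => h.1.1⟩ ⟨⟨hτ.1, hτ.2.le.trans hσx.2⟩, hτL.le⟩)
  have habove : ∀ τ ∈ Icc s σ, L ≤ Y τ := by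
    rcases hσx.1.eq_or_lt with hsσ | hsσ
    · intro τ hτ
      obtain rfl : τ = s := le_antisymm (hτ.2.trans hsσ.ge) hτ.1
      exact runningInf_le (hY.mono (Icc_subset_Icc_right hsx)) hs
    · rw [← closure_Ico hsσ.ne]
      exact le_on_closure hbefore continuousOn_const
        (closure_Ico hsσ.ne ▸ hYσ.mono (Icc_subset_Icc_left hs))
  refine ⟨σ, hσx, le_antisymm hσS.2 (habove σ (right_mem_Icc.2 hσx.1)), ?_⟩
  rw [runningInf_eq_min hYσ hs hσx.1]
  exact min_eq_left (le_csInf ((nonempty_Icc.2 hσx.1).image Y) (forall_mem_image.2 habove))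

theorem sInf_image_sub_two_mul_runningInf (hY : ContinuousOn Y (Icc 0 x)) (hs : 0 ≤ s)
    (hsx : s ≤ x) :
    sInf ((fun σ => Y σ - 2 * runningInf Y σ) '' Icc s x)
      = sInf (Y '' Icc s x) - runningInf Y s - runningInf Y x := by
  set J := runningInf Y
  set m := sInf (Y '' Icc s x)
  have hYsx : ContinuousOn Y (Icc s x) := hY.mono (Icc_subset_Icc_left hs)
  have hmY : ∀ σ ∈ Icc s x, m ≤ Y σ := fun σ hσ => hYsx.sInf_image_Icc_le hσ
  have hJY : ∀ σ ∈ Icc s x, J σ ≤ Y σ := fun σ hσ =>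
    runningInf_le (hY.mono (Icc_subset_Icc_right hσ.2)) (hs.trans hσ.1)
  have hJs : ∀ σ ∈ Icc s x, J σ ≤ J s := fun σ hσ =>
    runningInf_anti (hY.mono (Icc_subset_Icc_right hσ.2)) hs hσ.1
  have hJx : J x = min (J s) m := runningInf_eq_min hY hs hsx
  have hlower : ∀ σ ∈ Icc s x, m - J s - J x ≤ Y σ - 2 * J σ := by
    intro σ hσ
    rcases min_choice (J s) m with h | h <;> rw [h] at hJx <;>
      linarith [hmY σ hσ, hJY σ hσ, hJs σ hσ]
  -- If `Y` sets no new minimum on `[s, x]`, a minimiser of `Y` there attains the bound;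
  -- otherwise the first time `Y` comes down to `J s` does.
  obtain ⟨σ, hσ, hσeq⟩ : ∃ σ ∈ Icc s x, Y σ - 2 * J σ = m - J s - J x := by
    rcases le_or_gt (J s) m with hsm | hms
    · obtain ⟨σ, hσ, hmσ⟩ := isCompact_Icc.exists_sInf_image_eq (nonempty_Icc.2 hsx) hYsx
      have hJσ : J σ = J s :=
        (runningInf_eq_min (hY.mono (Icc_subset_Icc_right hσ.2)) hs hσ.1).trans <|
          min_eq_left (hsm.trans (csInf_le_csInf (isCompact_Icc.bddBelow_image hYsx)
            ((nonempty_Icc.2 hσ.1).image Y) (image_mono (Icc_subset_Icc_right hσ.2))))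
      refine ⟨σ, hσ, ?_⟩
      rw [hJσ, hJx, min_eq_left hsm, ← hmσ]
      ring
    · obtain ⟨σ, hσ, hYσ, hJσ⟩ : ∃ σ ∈ Icc s x, Y σ = J s ∧ J σ = J s :=
        exists_hitting_runningInf hY hs hsx hms
      refine ⟨σ, hσ, ?_⟩
      rw [hYσ, hJσ, hJx, min_eq_right hms.le]
      ring
  refine le_antisymm ?_ (le_csInf ((nonempty_Icc.2 hsx).image _) (forall_mem_image.2 hlower))
  exact hσeq ▸ csInf_le ⟨_, forall_mem_image.2 hlower⟩ (mem_image_of_mem _ hσ)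

theorem sInf_exchange_runningInf {B : ℝ → ℝ} {c : ℝ} (hc : 0 ≤ c) (hx : 0 ≤ x)
    (hY : ContinuousOn Y (Icc 0 x)) (hB : BddBelow (B '' Icc 0 x)) :
    sInf ((fun σ => c * Y σ + sInf ((fun s => B s - c * runningInf Y s) '' Icc 0 σ)) '' Icc 0 x)
      = c * runningInf Y x
        + sInf ((fun σ => c * (Y σ - 2 * runningInf Y σ) + sInf (B '' Icc 0 σ)) '' Icc 0 x) := by
  have hJ := runningInf_continuousOn hY
  have hYh : ContinuousOn (fun σ => c * (Y σ - 2 * runningInf Y σ)) (Icc 0 x) :=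
    continuousOn_const.mul (hY.sub (continuousOn_const.mul hJ))
  have hcY : ContinuousOn (fun σ => c * Y σ) (Icc 0 x) := continuousOn_const.mul hY
  have hcJ : ContinuousOn (fun s => -(c * runningInf Y s)) (Icc 0 x) :=
    (continuousOn_const.mul hJ).neg
  have hBJ : BddBelow ((fun s => B s - c * runningInf Y s) '' Icc 0 x) := by
    simpa only [sub_eq_add_neg] using bddBelow_image_add hB (isCompact_Icc.bddBelow_image hcJ)
  have hBYh : BddBelow
      ((fun s => B s + sInf ((fun σ => c * (Y σ - 2 * runningInf Y σ)) '' Icc s x)) '' Icc 0 x) :=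
    bddBelow_image_add hB ⟨_, forall_mem_image.2 fun s hs =>
      csInf_le_csInf (isCompact_Icc.bddBelow_image hYh) ((nonempty_Icc.2 hs.2).image _)
        (image_mono (Icc_subset_Icc_left hs.1))⟩
  rw [sInf_Icc_add_sInf_Icc_comm hx (isCompact_Icc.bddBelow_image hcY) hBJ,
    sInf_Icc_add_sInf_Icc_comm hx (isCompact_Icc.bddBelow_image hYh) hB,
    ← sInf_image_const_add (nonempty_Icc.2 hx) hBYh]
  refine congrArg sInf (image_congr fun s hs => ?_)
  rw [sInf_image_const_mul hc, sInf_image_const_mul hc,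
    sInf_image_sub_two_mul_runningInf hY hs.1 hs.2]
  ring

end RunningInf

theorem antitone_fin_cons_iff {γ : Type*} [Preorder γ] {k : ℕ} {a : γ} {v : Fin k → γ} :
    Antitone (Fin.cons a v : Fin (k + 1) → γ) ↔ (∀ i, v i ≤ a) ∧ Antitone v := by
  refine ⟨fun h => ⟨fun i => by simpa using h (Fin.zero_le i.succ),
    fun i j hij => by simpa using h (Fin.succ_le_succ_iff.2 hij)⟩, ?_⟩
  rintro ⟨hva, hv⟩ i j hij
  cases i using Fin.cases with
  | zero => cases j using Fin.cases with
    | zero => exact le_rfl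
    | succ j => simpa using hva j
  | succ i => cases j using Fin.cases with
    | zero => exact absurd hij (by simp)
    | succ j => simpa using hv (Fin.succ_le_succ_iff.1 hij)

/-- `chainInf f k x` is the infimum of `∑ i < k, f i (s i)` over chains
`x ≥ s 0 ≥ ⋯ ≥ s (k - 1) ≥ 0` (`chainInf_eq_sInf`), computed by conditioning on `s 0`. -/
noncomputable def chainInf : (ℕ → ℝ → ℝ) → ℕ → ℝ → ℝ
  | _, 0, _ => 0
  | f, k + 1, x => sInf ((fun u => f 0 u + chainInf (fun i => f (i + 1)) k u) '' Icc 0 x)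

section Chains

variable {f : ℕ → ℝ → ℝ} {k : ℕ} {x : ℝ}

theorem bddBelow_chainInf (hf : ∀ i, BddBelow (f i '' Icc 0 x)) :
    BddBelow (chainInf f k '' Icc 0 x) := by
  induction k generalizing f with
  | zero => exact ⟨0, forall_mem_image.2 fun _ _ => le_of_eq rfl⟩
  | succ k ih =>
    obtain ⟨C, hC⟩ := bddBelow_image_add (hf 0) (ih fun i => hf (i + 1))
    refine ⟨C, forall_mem_image.2 fun u hu => ?_⟩
    rw [chainInf]
    exact le_csInf ((nonempty_Icc.2 hu.1).image _) (forall_mem_image.2 fun v hv =>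
      hC (mem_image_of_mem _ (Icc_subset_Icc_right hu.2 hv)))

theorem le_chainInf_iff {c : ℝ} (hx : 0 ≤ x) (hf : ∀ i, BddBelow (f i '' Icc 0 x)) :
    c ≤ chainInf f k x ↔
      ∀ s : Fin k → ℝ, Antitone s → (∀ i, s i ∈ Icc 0 x) → c ≤ ∑ i : Fin k, f i (s i) := by
  induction k generalizing f x c with
  | zero => simp [chainInf, Subsingleton.antitone]
  | succ k ih =>
    have hf' : ∀ u ∈ Icc 0 x, ∀ i, BddBelow (f (i + 1) '' Icc 0 u) := fun u hu i =>
      (hf (i + 1)).mono (image_mono (Icc_subset_Icc_right hu.2))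
    rw [chainInf,
      le_csInf_iff (bddBelow_image_add (hf 0) (bddBelow_chainInf fun i => hf (i + 1)))
        ((nonempty_Icc.2 hx).image _), forall_mem_image, Fin.forall_fin_succ_pi]
    refine forall_congr' fun a => ?_
    simp only [antitone_fin_cons_iff, Fin.forall_fin_succ, Fin.cons_zero, Fin.cons_succ,
      Fin.sum_univ_succ, Fin.val_zero, Fin.val_succ, and_imp]
    constructor
    · intro h v hva hv ha hvx
      have := (ih ha.1 (hf' a ha)).1 (sub_le_iff_le_add'.2 (h ha)) v hv
        fun i => ⟨(hvx i).1, hva i⟩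
      linarith
    · intro h ha
      refine sub_le_iff_le_add'.1 ((ih ha.1 (hf' a ha)).2 fun v hv hva => ?_)
      have := h v (fun i => (hva i).2) hv ha fun i => ⟨(hva i).1, (hva i).2.trans ha.2⟩
      linarith

theorem chainInf_eq_sInf (hx : 0 ≤ x) (hf : ∀ i, BddBelow (f i '' Icc 0 x)) :
    chainInf f k x = sInf {y | ∃ s : Fin k → ℝ, Antitone s ∧ (∀ i, s i ∈ Icc 0 x) ∧
      y = ∑ i : Fin k, f i (s i)} := by
  symm
  refine IsGLB.csInf_eq ⟨?_, fun c hc => ?_⟩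
    ⟨_, fun _ => 0, antitone_const, fun _ => left_mem_Icc.2 hx, rfl⟩
  · rintro _ ⟨s, hs, hsx, rfl⟩
    exact (le_chainInf_iff hx hf).1 le_rfl s hs hsx
  · exact (le_chainInf_iff hx hf).2 fun s hs hsx => hc ⟨s, hs, hsx, rfl⟩

end Chains

def altFamily (w : ℕ → ℝ) (g h : ℝ → ℝ) (i : ℕ) (u : ℝ) : ℝ :=
  w i * if Even i then g u else h u

section Alternating

variable {ρ x : ℝ} {w : ℕ → ℝ} {g h X Y : ℝ → ℝ}

theorem altFamily_succ :
    (fun i => altFamily w g h (i + 1)) = altFamily (fun i => w (i + 1)) h g := by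
  funext i u
  by_cases hi : Even i <;> simp [altFamily, hi, Nat.even_add_one]

theorem chainInf_altFamily_succ (k : ℕ) :
    chainInf (altFamily w g h) (k + 1) x
      = sInf ((fun u => w 0 * g u + chainInf (altFamily (fun i => w (i + 1)) h g) k u)
          '' Icc 0 x) := by
  rw [chainInf, altFamily_succ]
  simp only [altFamily, Even.zero, if_true]

theorem continuousOn_altFamily {S : Set ℝ} (hg : ContinuousOn g S) (hh : ContinuousOn h S)
    (i : ℕ) : ContinuousOn (altFamily w g h i) S := by
  unfold altFamily
  split_ifs <;> exact continuousOn_const.mul ‹_›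

theorem bddBelow_altFamily (hg : ContinuousOn g (Icc 0 x)) (hh : ContinuousOn h (Icc 0 x))
    (i : ℕ) : BddBelow (altFamily w g h i '' Icc 0 x) :=
  isCompact_Icc.bddBelow_image (continuousOn_altFamily hg hh i)

theorem chainInf_altFamily_odd (hrec : ∀ i, w (i + 2) = 2 * ρ * w (i + 1) - w i)
    (hX : ContinuousOn X (Icc 0 x)) (hY : ContinuousOn Y (Icc 0 x)) (hx : 0 ≤ x) (k : ℕ)
    (hw : ∀ i < 2 * k + 1, 0 ≤ w i) :
    chainInf (altFamily w Y X) (2 * k + 1) x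
      = w 0 * runningInf Y x + chainInf (altFamily w (fun u => Y u - 2 * runningInf Y u)
          (fun u => X u + 2 * ρ * runningInf Y u)) (2 * k) x := by
  induction k generalizing w x with
  | zero =>
    rw [chainInf_altFamily_succ]
    simp only [chainInf, add_zero]
    exact sInf_image_const_mul (hw 0 (by omega))
  | succ k ih =>
    set J := runningInf Y
    set Yh := fun u => Y u - 2 * J u
    set Xh := fun u => X u + 2 * ρ * J u
    have hJ : ContinuousOn J (Icc 0 x) := runningInf_continuousOn hY
    have hYh : ContinuousOn Yh (Icc 0 x) := hY.sub (continuousOn_const.mul hJ)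
    have hXh : ContinuousOn Xh (Icc 0 x) := hX.add (continuousOn_const.mul hJ)
    set B := fun s => w 1 * Xh s + chainInf (altFamily (fun i => w (i + 2)) Yh Xh) (2 * k) s
    have hB : BddBelow (B '' Icc 0 x) :=
      bddBelow_image_add (isCompact_Icc.bddBelow_image (continuousOn_const.mul hXh))
        (bddBelow_chainInf (bddBelow_altFamily hYh hXh))
    calc chainInf (altFamily w Y X) (2 * (k + 1) + 1) x
        = sInf ((fun σ => w 0 * Y σ + sInf ((fun s => B s - w 0 * J s) '' Icc 0 σ))
            '' Icc 0 x) := by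
          rw [show 2 * (k + 1) + 1 = 2 * k + 1 + 1 + 1 by ring, chainInf_altFamily_succ]
          refine congrArg sInf (image_congr fun σ hσ => ?_)
          rw [chainInf_altFamily_succ]
          refine congrArg (w 0 * Y σ + sInf ·) (image_congr fun s hs => ?_)
          have hsx : Icc 0 s ⊆ Icc 0 x := Icc_subset_Icc_right (hs.2.trans hσ.2)
          rw [ih (fun i => hrec (i + 2)) (hX.mono hsx) (hY.mono hsx) hs.1
            fun i hi => hw (i + 2) (by omega)]
          -- `hrec 0` turns `w 1 * X + w 2 * J` into `w 1 * Xh - w 0 * J`.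
          simp only [B, Xh, hrec 0]
          ring
      _ = w 0 * J x + sInf ((fun σ => w 0 * Yh σ + sInf (B '' Icc 0 σ)) '' Icc 0 x) :=
          sInf_exchange_runningInf (hw 0 (by omega)) hx hY hB
      _ = w 0 * J x + chainInf (altFamily w Yh Xh) (2 * (k + 1)) x := by
          rw [show 2 * (k + 1) = 2 * k + 1 + 1 by ring, chainInf_altFamily_succ]
          refine congrArg (w 0 * J x + sInf ·) (image_congr fun σ _ => ?_)
          rw [chainInf_altFamily_succ]

theorem chainInf_altFamily_even (hrec : ∀ i, w (i + 2) = 2 * ρ * w (i + 1) - w i)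
    (h10 : w 1 = 2 * ρ * w 0) (hX : ContinuousOn X (Icc 0 x)) (hY : ContinuousOn Y (Icc 0 x))
    (k : ℕ) (hw : ∀ i < 2 * k, 0 ≤ w i) :
    chainInf (altFamily w X Y) (2 * k) x
      = chainInf (altFamily w (fun u => X u + 2 * ρ * runningInf Y u)
          (fun u => Y u - 2 * runningInf Y u)) (2 * k - 1) x := by
  rcases k with _ | k
  · rfl
  rw [show 2 * (k + 1) - 1 = 2 * k + 1 by omega, show 2 * (k + 1) = 2 * k + 1 + 1 by ring,
    chainInf_altFamily_succ, chainInf_altFamily_succ]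
  refine congrArg sInf (image_congr fun s hs => ?_)
  have hsx : Icc 0 s ⊆ Icc 0 x := Icc_subset_Icc_right hs.2
  rw [chainInf_altFamily_odd (fun i => hrec (i + 1)) (hX.mono hsx) (hY.mono hsx) hs.1 k
    fun i hi => hw (i + 1) (by omega), h10]
  ring

end Alternating

section Pitman

variable {V : Type*} [AddCommGroup V] [Module ℝ V] {α : V} {αv βv : Module.Dual ℝ V}
  {π : ℝ → V} {ρ : ℝ}

theorem dual_pitman_self (hα : αv α = 2) :
    (fun u => αv (pitman α αv π u))
      = fun u => αv (π u) - 2 * runningInf (fun s => αv (π s)) u := by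
  funext u
  simp [pitman, runningInf, hα, mul_comm]

theorem dual_pitman_other (hβα : βv α = -(2 * ρ)) :
    (fun u => βv (pitman α αv π u))
      = fun u => βv (π u) + 2 * ρ * runningInf (fun s => αv (π s)) u := by
  funext u
  simp [pitman, runningInf, hβα, mul_comm]

end Pitman

theorem altComp_succ_eq_comp {γ : Type*} (P Q : γ → γ) (n : ℕ) :
    altComp P Q (n + 1) = altComp P Q n ∘ if Even n then P else Q := by
  induction n generalizing P Q with
  | zero => simp [altComp]
  | succ n ih =>
    rw [altComp, ih Q P, altComp, Function.comp_assoc]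
    by_cases hn : Even n <;> simp [hn, Nat.even_add_one]

section Chebyshev

open Polynomial Chebyshev

theorem chebyshevU_eval_natCast_add_two (ρ : ℝ) (i : ℕ) :
    (U ℝ ↑(i + 2)).eval ρ = 2 * ρ * (U ℝ ↑(i + 1)).eval ρ - (U ℝ ↑i).eval ρ := by
  push_cast
  simp [U_add_two]

theorem one_le_chebyshevU_eval_and_le_succ {ρ : ℝ} (hρ : 1 ≤ ρ) (i : ℕ) :
    1 ≤ (U ℝ ↑i).eval ρ ∧ (U ℝ ↑i).eval ρ ≤ (U ℝ ↑(i + 1)).eval ρ := by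
  induction i with
  | zero =>
    simp only [Nat.cast_zero, U_zero, eval_one, zero_add, Nat.cast_one, U_one, eval_mul,
      eval_ofNat, eval_X]
    constructor <;> linarith
  | succ i ih =>
    have := chebyshevU_eval_natCast_add_two ρ i
    constructor <;> nlinarith

theorem chebyshevU_eval_nonneg {ρ : ℝ} {n i : ℕ} (hρ : Real.cos (Real.pi / n) ≤ ρ)
    (hi : i < n) : 0 ≤ (U ℝ ↑i).eval ρ := by
  rcases le_or_gt 1 ρ with h1 | h1
  · exact zero_le_one.trans (one_le_chebyshevU_eval_and_le_succ h1 i).1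
  rcases Nat.eq_zero_or_pos i with rfl | hi0
  · simp
  have hn : (2 : ℝ) ≤ n := by exact_mod_cast (show 2 ≤ n by omega)
  set φ := Real.arccos ρ
  have hφ : φ ≤ Real.pi / n := by
    rw [← Real.arccos_cos (by positivity) (div_le_self Real.pi_pos.le (by linarith))]
    exact Real.arccos_le_arccos hρ
  have hφ0 : 0 < φ := Real.arccos_pos.2 h1
  have hsin : 0 < Real.sin φ :=
    Real.sin_pos_of_pos_of_lt_pi hφ0 (hφ.trans_lt (div_lt_self Real.pi_pos (by linarith)))
  have hU := U_real_cos φ i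
  rw [Real.cos_arccos ((Real.neg_one_le_cos _).trans hρ) h1.le] at hU
  refine nonneg_of_mul_nonneg_left
    (hU ▸ Real.sin_nonneg_of_nonneg_of_le_pi (by positivity) ?_) hsin
  calc ((i : ℤ) + 1 : ℝ) * φ ≤ n * (Real.pi / n) := by
        gcongr
        exact_mod_cast Nat.succ_le_of_lt hi
    _ = Real.pi := by field_simp

end Chebyshev

open Polynomial.Chebyshev in
theorem altComp_pitman_apply {V : Type*} [AddCommGroup V] [Module ℝ V] {α β : V}
    {αv βv : Module.Dual ℝ V} {ρ t : ℝ} (hα : αv α = 2) (hβ : βv β = 2)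
    (hαβ : αv β = -(2 * ρ)) (hβα : βv α = -(2 * ρ)) (ht : 0 ≤ t) (n : ℕ)
    (hw : ∀ i < n, 0 ≤ (U ℝ ↑i).eval ρ) (π : ℝ → V)
    (hX : ContinuousOn (fun u => αv (π u)) (Icc 0 t))
    (hY : ContinuousOn (fun u => βv (π u)) (Icc 0 t)) :
    altComp (pitman α αv) (pitman β βv) n π t
      = π t
        - chainInf (altFamily (fun i => (U ℝ ↑i).eval ρ) (fun u => αv (π u))
            (fun u => βv (π u))) n t • α
        - chainInf (altFamily (fun i => (U ℝ ↑i).eval ρ) (fun u => βv (π u))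
            (fun u => αv (π u))) (n - 1) t • β := by
  induction n generalizing π with
  | zero => simp [altComp, chainInf]
  | succ n ih =>
    have hrec := chebyshevU_eval_natCast_add_two ρ
    have h10 : (U ℝ ↑1).eval ρ = 2 * ρ * (U ℝ ↑0).eval ρ := by simp
    have hw' : ∀ i < n, 0 ≤ (U ℝ ↑i).eval ρ := fun i hi => hw i (by omega)
    rw [altComp_succ_eq_comp, Function.comp_apply, Nat.add_sub_cancel]
    rcases Nat.even_or_odd' n with ⟨k, rfl | rfl⟩
    · have hJ := runningInf_continuousOn hX
      rw [if_pos (even_two_mul k), ih hw' _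
        (dual_pitman_self hα ▸ hX.sub (continuousOn_const.mul hJ))
        (dual_pitman_other hβα ▸ hY.add (continuousOn_const.mul hJ)),
        dual_pitman_self hα, dual_pitman_other hβα,
        chainInf_altFamily_odd hrec hY hX ht k hw, chainInf_altFamily_even hrec h10 hY hX k hw']
      simp only [pitman, runningInf, Nat.cast_zero, U_zero, Polynomial.eval_one, one_mul]
      module
    · have hJ := runningInf_continuousOn hY
      rw [if_neg (Nat.not_even_two_mul_add_one k), ih hw' _
        (dual_pitman_other hαβ ▸ hX.add (continuousOn_const.mul hJ))
        (dual_pitman_self hβ ▸ hY.sub (continuousOn_const.mul hJ)),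
        dual_pitman_self hβ, dual_pitman_other hαβ,
        Nat.add_sub_cancel, show 2 * k + 1 + 1 = 2 * (k + 1) by ring,
        chainInf_altFamily_even hrec h10 hX hY (k + 1) hw,
        show 2 * (k + 1) - 1 = 2 * k + 1 by omega, chainInf_altFamily_odd hrec hX hY ht k hw']
      simp only [pitman, runningInf, Nat.cast_zero, U_zero, Polynomial.eval_one, one_mul]
      module

end PitmanChebyshev

open Set PitmanChebyshev in
theorem pitman_chebyshev_formula_general
    {V : Type*} [NormedAddCommGroup V] [NormedSpace ℝ V] [FiniteDimensional ℝ V]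
    (T : ℝ) (α β : V) (αv βv : Module.Dual ℝ V)
    (hα : αv α = 2) (hβ : βv β = 2)
    (ρ : ℝ)
    (hαβ : αv β = -(2 * ρ)) (hβα : βv α = -(2 * ρ))
    (n : ℕ) (hρ : Real.cos (Real.pi / n) ≤ ρ)
    (π : ℝ → V) (hcont : ContinuousOn π (Set.Icc 0 T)) :
    ∀ t ∈ Set.Icc 0 T,
      altComp (pitman α αv) (pitman β βv) n π t
        = π t
          - sInf {y : ℝ | ∃ s : Fin n → ℝ, Antitone s ∧ (∀ i, s i ∈ Set.Icc 0 t) ∧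
              y = ∑ i : Fin n, (Polynomial.Chebyshev.U ℝ (i : ℤ)).eval ρ *
                    (if Even (i : ℕ) then αv (π (s i)) else βv (π (s i)))} • α
          - sInf {y : ℝ | ∃ s : Fin (n - 1) → ℝ, Antitone s ∧ (∀ i, s i ∈ Set.Icc 0 t) ∧
              y = ∑ i : Fin (n - 1), (Polynomial.Chebyshev.U ℝ (i : ℤ)).eval ρ *
                    (if Even ((i : ℕ) + 1) then αv (π (s i)) else βv (π (s i)))} • β := by
  intro t ht
  have hsub : Icc 0 t ⊆ Icc 0 T := Icc_subset_Icc_right ht.2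
  have hX : ContinuousOn (fun u => αv (π u)) (Icc 0 t) :=
    ((LinearMap.continuous_of_finiteDimensional αv).comp_continuousOn hcont).mono hsub
  have hY : ContinuousOn (fun u => βv (π u)) (Icc 0 t) :=
    ((LinearMap.continuous_of_finiteDimensional βv).comp_continuousOn hcont).mono hsub
  rw [altComp_pitman_apply hα hβ hαβ hβα ht.1 n (fun _ hi => chebyshevU_eval_nonneg hρ hi) π
      hX hY,
    chainInf_eq_sInf ht.1 (bddBelow_altFamily hX hY),
    chainInf_eq_sInf ht.1 (bddBelow_altFamily hY hX)]
  simp only [altFamily, Nat.even_add_one, ite_not]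

/-- Theorem 2.4 of Biane–Bougerol–O'Connell: a Chebyshev-polynomial formula for the
alternating composition `P_α P_β P_α ⋯` (`n` factors).  Here `U k` is the `k`-th
Chebyshev polynomial of the second kind (denoted `T_k` in the paper), and
`Z⁽ᵏ⁾ = α∨∘π` for `k` even, `β∨∘π` for `k` odd. -/
theorem pitman_chebyshev_formula
    {V : Type*} [NormedAddCommGroup V] [NormedSpace ℝ V] [FiniteDimensional ℝ V]
    (T : ℝ) (hT : 0 < T) (α β : V) (αv βv : Module.Dual ℝ V)
    (hα : αv α = 2) (hβ : βv β = 2)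
    (ρ : ℝ) (hρpos : 0 < ρ)
    (hαβ : αv β = -(2 * ρ)) (hβα : βv α = -(2 * ρ))
    (n : ℕ) (hn : 1 ≤ n) (hρ : Real.cos (Real.pi / n) ≤ ρ)
    (π : ℝ → V) (hcont : ContinuousOn π (Set.Icc 0 T)) (h0 : π 0 = 0) :
    ∀ t ∈ Set.Icc 0 T,
      altComp (pitman α αv) (pitman β βv) n π t
        = π t
          - sInf {y : ℝ | ∃ s : Fin n → ℝ, Antitone s ∧ (∀ i, s i ∈ Set.Icc 0 t) ∧
              y = ∑ i : Fin n, (Polynomial.Chebyshev.U ℝ (i : ℤ)).eval ρ *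
                    (if Even (i : ℕ) then αv (π (s i)) else βv (π (s i)))} • α
          - sInf {y : ℝ | ∃ s : Fin (n - 1) → ℝ, Antitone s ∧ (∀ i, s i ∈ Set.Icc 0 t) ∧
              y = ∑ i : Fin (n - 1), (Polynomial.Chebyshev.U ℝ (i : ℤ)).eval ρ *
                    (if Even ((i : ℕ) + 1) then αv (π (s i)) else βv (π (s i)))} • β :=
  pitman_chebyshev_formula_general T α β αv βv hα hβ ρ hαβ hβα n hρ π hcont
end

section
/- Let X : [0,t] → ℝ be continuous with X(0) = 0, and set t_0 = sup{ s ∈ [0,t] : X(s) = inf_{0≤u≤s} X(u) }. Then for all u ∈ [0, t_0], one has inf_{u≤s≤t} ( X(s) − 2 inf_{0≤w≤s} X(w) ) = − inf_{0≤v≤u} X(v). -/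
/-!
Write `I s` for the running infimum of `X` over `[0, s]`. The lower bound is immediate: for
`s ≥ u`, `I s` is at most both `X s` and `I u`, so `X s - 2 I s ≥ -I s ≥ -I u`. For equality
one needs a time `p ∈ [u, t]` with `X p = I p = I u`. The last running-minimum time `t₀` is
itself a running-minimum time (the set of such times is closed), so
`X t₀ = I t₀ ≤ I u ≤ X u`, and the first time in `[u, t₀]` at which `X` reaches the level
`I u` is such a `p`.
-/

open Set

lemma IsMinOn.union {α β : Type*} [Preorder β] {f : α → β} {s t : Set α} {a : α}
    (hs : IsMinOn f s a) (ht : IsMinOn f t a) : IsMinOn f (s ∪ t) a :=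
  fun _ hx => hx.elim (fun h => hs h) (fun h => ht h)

section RunningInfimum

variable {X : ℝ → ℝ} {a b : ℝ}

lemma sInf_image_Icc_le_apply (hX : ContinuousOn X (Icc a b)) {w : ℝ} (hw : w ∈ Icc a b) :
    sInf (X '' Icc a b) ≤ X w :=
  csInf_le (isCompact_Icc.bddBelow_image hX) (mem_image_of_mem X hw)

lemma sInf_image_Icc_anti {c : ℝ} (hX : ContinuousOn X (Icc a c)) (hab : a ≤ b)
    (hbc : b ≤ c) :
    sInf (X '' Icc a c) ≤ sInf (X '' Icc a b) :=
  csInf_le_csInf (isCompact_Icc.bddBelow_image hX) ((nonempty_Icc.2 hab).image X)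
    (image_mono (Icc_subset_Icc_right hbc))

lemma eq_sInf_image_Icc_iff_isMinOn (hX : ContinuousOn X (Icc a b)) (hab : a ≤ b) :
    X b = sInf (X '' Icc a b) ↔ IsMinOn X (Icc a b) b := by
  refine ⟨fun h => isMinOn_iff.2 fun w hw => h ▸ sInf_image_Icc_le_apply hX hw, fun h => ?_⟩
  refine (IsLeast.csInf_eq ?_).symm
  exact ⟨mem_image_of_mem X ⟨hab, le_rfl⟩, forall_mem_image.2 (isMinOn_iff.1 h)⟩

lemma isClosed_setOf_isMinOn_Icc (hX : ContinuousOn X (Icc a b)) :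
    IsClosed {s | s ∈ Icc a b ∧ IsMinOn X (Icc a s) s} := by
  refine isClosed_of_closure_subset fun s hs => ?_
  have hsab : s ∈ Icc a b := closure_minimal (fun x hx => hx.1) isClosed_Icc hs
  refine ⟨hsab, isMinOn_iff.2 fun w hw => ?_⟩
  rcases hw.2.eq_or_lt with rfl | hws
  · exact le_rfl
  -- `s` is also a limit of running-minimum times later than `w`, each of which lies below `X w`.
  have hsub : Ioi w ∩ {x | x ∈ Icc a b ∧ IsMinOn X (Icc a x) x} ⊆
      {x | x ∈ Icc a b ∧ X x ≤ X w} :=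
    fun x ⟨hwx, hx, hmin⟩ => ⟨hx, isMinOn_iff.1 hmin w ⟨hw.1, hwx.le⟩⟩
  have hclosed : IsClosed {x | x ∈ Icc a b ∧ X x ≤ X w} :=
    isClosed_Icc.isClosed_le hX continuousOn_const
  exact (closure_minimal hsub hclosed (isOpen_Ioi.inter_closure ⟨hws, hs⟩)).2

lemma exists_eq_isMinOn_Icc_of_le_of_le (hX : ContinuousOn X (Icc a b)) (hab : a ≤ b) {m : ℝ}
    (hb : X b ≤ m) (ha : m ≤ X a) : ∃ p ∈ Icc a b, X p = m ∧ IsMinOn X (Icc a p) p := by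
  set S := Icc a b ∩ X ⁻¹' {m}
  have hS : IsClosed S := hX.preimage_isClosed_of_isClosed isClosed_Icc isClosed_singleton
  obtain ⟨q, hq, hXq⟩ := intermediate_value_Icc' hab hX ⟨hb, ha⟩
  obtain ⟨hp, hXp⟩ : sInf S ∈ S := hS.csInf_mem ⟨q, hq, hXq⟩ ⟨a, fun x hx => hx.1.1⟩
  refine ⟨sInf S, hp, hXp, isMinOn_iff.2 fun w hw => ?_⟩
  rw [show X (sInf S) = m from hXp]
  -- A dip below `m` before the first hitting time would force an earlier hit.
  by_contra! hlt
  obtain ⟨r, hr, hXr⟩ :=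
    intermediate_value_Icc' hw.1 (hX.mono (Icc_subset_Icc_right (hw.2.trans hp.2))) ⟨hlt.le, ha⟩
  have hrS : r ∈ S := ⟨⟨hr.1, hr.2.trans (hw.2.trans hp.2)⟩, hXr⟩
  have hwr : w = r := le_antisymm (hw.2.trans (csInf_le ⟨a, fun x hx => hx.1.1⟩ hrS)) hr.2
  exact hlt.ne (hwr ▸ hXr)

end RunningInfimum

theorem pitman_aux_lemma_general
    (t : ℝ) (ht : 0 < t) (X : ℝ → ℝ)
    (hX : ContinuousOn X (Set.Icc 0 t)) :
    ∀ u ∈ Set.Icc (0 : ℝ)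
        (sSup {s | s ∈ Set.Icc 0 t ∧ X s = sInf (X '' Set.Icc 0 s)}),
      sInf ((fun s => X s - 2 * sInf (X '' Set.Icc 0 s)) '' Set.Icc u t)
        = -sInf (X '' Set.Icc 0 u) := by
  intro u hu
  have hXon : ∀ {s}, s ≤ t → ContinuousOn X (Icc 0 s) :=
    fun hs => hX.mono (Icc_subset_Icc_right hs)
  have hT : {s | s ∈ Icc 0 t ∧ X s = sInf (X '' Icc 0 s)} =
      {s | s ∈ Icc 0 t ∧ IsMinOn X (Icc 0 s) s} :=
    ext fun s => and_congr_right fun hs => eq_sInf_image_Icc_iff_isMinOn (hXon hs.2) hs.1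
  rw [hT] at hu
  set t₀ := sSup {s | s ∈ Icc 0 t ∧ IsMinOn X (Icc 0 s) s}
  have h0T : (0 : ℝ) ∈ {s | s ∈ Icc 0 t ∧ IsMinOn X (Icc 0 s) s} :=
    ⟨⟨le_rfl, ht.le⟩, isMinOn_iff.2 fun w hw => by rw [le_antisymm hw.2 hw.1]⟩
  obtain ⟨ht₀, hmin₀⟩ : t₀ ∈ {s | s ∈ Icc 0 t ∧ IsMinOn X (Icc 0 s) s} :=
    (isClosed_setOf_isMinOn_Icc hX).csSup_mem ⟨0, h0T⟩ ⟨t, fun s hs => hs.1.2⟩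
  have hut : u ≤ t := hu.2.trans ht₀.2
  set m := sInf (X '' Icc 0 u)
  have hXt₀ : X t₀ ≤ m := (eq_sInf_image_Icc_iff_isMinOn (hXon ht₀.2) ht₀.1).2 hmin₀ ▸
    sInf_image_Icc_anti (hXon ht₀.2) hu.1 hu.2
  have hmXu : m ≤ X u := sInf_image_Icc_le_apply (hXon hut) ⟨hu.1, le_rfl⟩
  obtain ⟨p, hp, hXp, hminp⟩ :=
    exists_eq_isMinOn_Icc_of_le_of_le (hX.mono (Icc_subset_Icc hu.1 ht₀.2)) hu.2 hXt₀ hmXu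
  have hpt : p ≤ t := hp.2.trans ht₀.2
  have hminu : IsMinOn X (Icc 0 u) p :=
    isMinOn_iff.2 fun w hw => hXp ▸ sInf_image_Icc_le_apply (hXon hut) hw
  have hIp : X p = sInf (X '' Icc 0 p) :=
    (eq_sInf_image_Icc_iff_isMinOn (hXon hpt) (hu.1.trans hp.1)).2 <|
      Icc_union_Icc_eq_Icc hu.1 hp.1 ▸ hminu.union hminp
  refine IsLeast.csInf_eq ⟨⟨p, ⟨hp.1, hpt⟩, by simp only [← hIp, hXp]; ring⟩, ?_⟩
  rintro _ ⟨s, hs, rfl⟩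
  have hIs : sInf (X '' Icc 0 s) ≤ X s :=
    sInf_image_Icc_le_apply (hXon hs.2) ⟨hu.1.trans hs.1, le_rfl⟩
  have hIsu : sInf (X '' Icc 0 s) ≤ m := sInf_image_Icc_anti (hXon hs.2) hu.1 hs.1
  dsimp only
  linarith

/-- Lemma 2.5 of Biane–Bougerol–O'Connell: if `X : [0,t] → ℝ` is continuous with
`X 0 = 0` and `t₀` is the last time at which `X` achieves its running infimum, then
for all `u ∈ [0, t₀]`,
`inf_{u ≤ s ≤ t} (X s − 2 inf_{0 ≤ w ≤ s} X w) = − inf_{0 ≤ v ≤ u} X v`. -/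
theorem pitman_aux_lemma
    (t : ℝ) (ht : 0 < t) (X : ℝ → ℝ)
    (hX : ContinuousOn X (Set.Icc 0 t)) (hX0 : X 0 = 0) :
    ∀ u ∈ Set.Icc (0 : ℝ)
        (sSup {s | s ∈ Set.Icc 0 t ∧ X s = sInf (X '' Set.Icc 0 s)}),
      sInf ((fun s => X s - 2 * sInf (X '' Set.Icc 0 s)) '' Set.Icc u t)
        = -sInf (X '' Set.Icc 0 u) :=
  pitman_aux_lemma_general t ht X hX
end

section
/- Let X, Y : [0,t] → ℝ be continuous with X(0) = Y(0) = 0. Then inf_{0≤s≤t} ( X(s) + inf_{0≤u≤s} Y(u) ) = inf_{0≤s≤t} X(s) + inf_{0≤s≤t} [ X(s) − 2 inf_{0≤u≤s} X(u) + inf_{0≤u≤s} ( Y(u) + inf_{0≤v≤u} X(v) ) ]. -/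
/-!
Write `m` for the running infimum of `X`. Both sides are infima over the triangle
`0 ≤ u ≤ s ≤ t`, of `X s + Y u` on the left and of `X s - 2 m s + Y u + m u` on the right.
Exchanging the two infima reduces the identity to the pathwise statement that, for each `u`,
`inf_{s ∈ [u,t]} (X s - 2 m s) = inf_{[u,t]} X - m u - m t`.
Since `m t = min (m u) (inf_{[u,t]} X)`, the lower bound follows from `X s ≥ m s`,
`X s ≥ inf_{[u,t]} X` and `m s ≤ m u`; it is attained at the first time after `u` at which `X`
comes down to `max (inf_{[u,t]} X) (m u)`, a time at which the running infimum still equals `m u`.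
-/

open Set

-- reducible, so that `rw` recognises `runningInf X s` in `sInf (X '' Icc 0 s)`
noncomputable abbrev runningInf (f : ℝ → ℝ) (s : ℝ) : ℝ := sInf (f '' Icc 0 s)

theorem bddBelow_image_add {α : Type*} {f g : α → ℝ} {s : Set α} (hf : BddBelow (f '' s))
    (hg : BddBelow (g '' s)) : BddBelow ((fun x => f x + g x) '' s) := by
  obtain ⟨a, ha⟩ := hf
  obtain ⟨b, hb⟩ := hg
  refine ⟨a + b, ?_⟩
  rintro _ ⟨x, hx, rfl⟩
  exact add_le_add (ha ⟨x, hx, rfl⟩) (hb ⟨x, hx, rfl⟩)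

theorem sInf_image_add_const {α : Type*} {f : α → ℝ} {s : Set α} (hs : s.Nonempty)
    (hf : BddBelow (f '' s)) (c : ℝ) :
    sInf ((fun x => f x + c) '' s) = sInf (f '' s) + c := by
  have := (OrderIso.addRight c).map_csInf' (hs.image f) hf
  rw [image_image] at this
  exact this.symm

theorem le_csInf_image_of_subset {α : Type*} {f : α → ℝ} {s T : Set α} {b : ℝ}
    (hs : s.Nonempty) (hsT : s ⊆ T) (hb : b ∈ lowerBounds (f '' T)) : b ≤ sInf (f '' s) :=
  le_csInf (hs.image f) fun _ hx => hb (image_mono hsT hx)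

theorem sInf_image_add_sInf_Icc_comm {F G : ℝ → ℝ} {a t : ℝ} (hat : a ≤ t)
    (hF : BddBelow (F '' Icc a t)) (hG : BddBelow (G '' Icc a t)) :
    sInf ((fun s => F s + sInf (G '' Icc a s)) '' Icc a t)
      = sInf ((fun u => G u + sInf (F '' Icc u t)) '' Icc a t) := by
  have hGs : ∀ s ∈ Icc a t, BddBelow (G '' Icc a s) := fun s hs =>
    hG.mono (image_mono (Icc_subset_Icc le_rfl hs.2))
  have hFu : ∀ u ∈ Icc a t, BddBelow (F '' Icc u t) := fun u hu =>
    hF.mono (image_mono (Icc_subset_Icc hu.1 le_rfl))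
  obtain ⟨cF, hcF⟩ := hF
  obtain ⟨cG, hcG⟩ := hG
  have hL : BddBelow ((fun s => F s + sInf (G '' Icc a s)) '' Icc a t) := by
    refine ⟨cF + cG, ?_⟩
    rintro _ ⟨s, hs, rfl⟩
    exact add_le_add (hcF ⟨s, hs, rfl⟩)
      (le_csInf_image_of_subset (nonempty_Icc.2 hs.1) (Icc_subset_Icc le_rfl hs.2) hcG)
  have hR : BddBelow ((fun u => G u + sInf (F '' Icc u t)) '' Icc a t) := by
    refine ⟨cG + cF, ?_⟩
    rintro _ ⟨u, hu, rfl⟩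
    exact add_le_add (hcG ⟨u, hu, rfl⟩)
      (le_csInf_image_of_subset (nonempty_Icc.2 hu.2) (Icc_subset_Icc hu.1 le_rfl) hcF)
  have hne : (Icc a t).Nonempty := nonempty_Icc.2 hat
  apply le_antisymm
  · refine le_csInf (hne.image _) ?_
    rintro _ ⟨u, hu, rfl⟩
    rw [← sub_le_iff_le_add']
    refine le_csInf ((nonempty_Icc.2 hu.2).image F) ?_
    rintro _ ⟨s, hs, rfl⟩
    have hs' : s ∈ Icc a t := ⟨hu.1.trans hs.1, hs.2⟩
    have h1 := csInf_le hL ⟨s, hs', rfl⟩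
    have h2 := csInf_le (hGs s hs') ⟨u, ⟨hu.1, hs.1⟩, rfl⟩
    dsimp only at h1
    linarith
  · refine le_csInf (hne.image _) ?_
    rintro _ ⟨s, hs, rfl⟩
    rw [← sub_le_iff_le_add']
    refine le_csInf ((nonempty_Icc.2 hs.1).image G) ?_
    rintro _ ⟨u, hu, rfl⟩
    have hu' : u ∈ Icc a t := ⟨hu.1, hu.2.trans hs.2⟩
    have h1 := csInf_le hR ⟨u, hu', rfl⟩
    have h2 := csInf_le (hFu u hu') ⟨s, ⟨hu.2, hs.2⟩, rfl⟩
    dsimp only at h1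
    linarith

theorem ContinuousOn.exists_first_eq {X : ℝ → ℝ} {a b c : ℝ} (hab : a ≤ b)
    (hX : ContinuousOn X (Icc a b)) (ha : c ≤ X a) (hb : X b ≤ c) :
    ∃ s ∈ Icc a b, X s = c ∧ ∀ v ∈ Icc a s, c ≤ X v := by
  set S := Icc a b ∩ X ⁻¹' {c}
  have hS : IsClosed S := hX.preimage_isClosed_of_isClosed isClosed_Icc isClosed_singleton
  have hne : S.Nonempty := intermediate_value_Icc' hab hX ⟨hb, ha⟩
  have hbdd : BddBelow S := ⟨a, fun v hv => hv.1.1⟩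
  obtain ⟨hmem, hXs⟩ := hS.csInf_mem hne hbdd
  refine ⟨sInf S, hmem, hXs, fun v hv => ?_⟩
  by_contra! hlt
  have hvb : v ≤ b := hv.2.trans hmem.2
  -- an earlier crossing of level `c` would contradict the minimality of `sInf S`
  obtain ⟨w, hw, hXw⟩ := intermediate_value_Icc' hv.1 (hX.mono (Icc_subset_Icc le_rfl hvb))
    ⟨hlt.le, ha⟩
  have hSw : sInf S ≤ w := csInf_le hbdd ⟨⟨hw.1, hw.2.trans hvb⟩, hXw⟩
  have hv_eq : v = sInf S := le_antisymm hv.2 (hSw.trans hw.2)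
  rw [hv_eq, hXs] at hlt
  exact lt_irrefl c hlt

section RunningInf

variable {X : ℝ → ℝ} {t : ℝ}

theorem runningInf_le (hX : ContinuousOn X (Icc 0 t)) {v s : ℝ} (hv : 0 ≤ v) (hvs : v ≤ s)
    (hst : s ≤ t) : runningInf X s ≤ X v :=
  csInf_le ((isCompact_Icc.image_of_continuousOn (hX.mono (Icc_subset_Icc le_rfl hst))).bddBelow)
    ⟨v, ⟨hv, hvs⟩, rfl⟩

theorem runningInf_eq_min (hX : ContinuousOn X (Icc 0 t)) {u s : ℝ} (hu : 0 ≤ u) (hus : u ≤ s)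
    (hst : s ≤ t) : runningInf X s = min (runningInf X u) (sInf (X '' Icc u s)) := by
  have hbdd : ∀ a b, 0 ≤ a → b ≤ t → BddBelow (X '' Icc a b) := fun a b ha hb =>
    (isCompact_Icc.image_of_continuousOn (hX.mono (Icc_subset_Icc ha hb))).bddBelow
  rw [runningInf, runningInf, ← Icc_union_Icc_eq_Icc hu hus, image_union]
  exact csInf_union (hbdd _ _ le_rfl (hus.trans hst)) ((nonempty_Icc.2 hu).image X)
    (hbdd _ _ hu hst) ((nonempty_Icc.2 hus).image X)

theorem runningInf_le_runningInf (hX : ContinuousOn X (Icc 0 t)) {u s : ℝ} (hu : 0 ≤ u)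
    (hus : u ≤ s) (hst : s ≤ t) : runningInf X s ≤ runningInf X u :=
  (runningInf_eq_min hX hu hus hst).trans_le (min_le_left _ _)

theorem sInf_image_sub_two_mul_runningInf (hX : ContinuousOn X (Icc 0 t)) {u : ℝ} (hu : 0 ≤ u)
    (hut : u ≤ t) :
    sInf ((fun s => X s - 2 * runningInf X s) '' Icc u t)
      = sInf (X '' Icc u t) - runningInf X u - runningInf X t := by
  set m := runningInf X
  set J := sInf (X '' Icc u t)
  have hmt : m t = min (m u) J := runningInf_eq_min hX hu hut le_rfl
  have hJ : IsCompact (X '' Icc u t) :=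
    isCompact_Icc.image_of_continuousOn (hX.mono (Icc_subset_Icc hu le_rfl))
  obtain ⟨r, hr, hXr⟩ := hJ.sInf_mem ((nonempty_Icc.2 hut).image X)
  have hXu : max J (m u) ≤ X u :=
    max_le (csInf_le hJ.bddBelow ⟨u, left_mem_Icc.2 hut, rfl⟩) (runningInf_le hX hu le_rfl hut)
  -- the minimum is attained when `X` first comes down to `max J (m u)` after time `u`
  obtain ⟨s', hs', hXs', hs'_first⟩ := ContinuousOn.exists_first_eq hr.1
    (hX.mono (Icc_subset_Icc hu hr.2)) hXu (hXr.symm ▸ le_max_left J (m u))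
  have hms' : m s' = m u := by
    have hinf : sInf (X '' Icc u s') = max J (m u) :=
      IsLeast.csInf_eq ⟨⟨s', right_mem_Icc.2 hs'.1, hXs'⟩,
        fun _ ⟨v, hv, hXv⟩ => hXv ▸ hs'_first v hv⟩
    rw [show m s' = _ from runningInf_eq_min hX hu hs'.1 (hs'.2.trans hr.2), hinf]
    exact min_eq_left (le_max_right J (m u))
  refine IsLeast.csInf_eq ⟨⟨s', ⟨hs'.1, hs'.2.trans hr.2⟩, ?_⟩, ?_⟩
  · dsimp only
    rw [hXs', hms', hmt, max_comm]
    linarith [min_add_max (m u) J]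
  · rintro _ ⟨s, hs, rfl⟩
    have hJs : J ≤ X s := csInf_le hJ.bddBelow ⟨s, hs, rfl⟩
    have hms : m s ≤ X s := runningInf_le hX (hu.trans hs.1) le_rfl hs.2
    have hmsu : m s ≤ m u := runningInf_le_runningInf hX hu hs.1 hs.2
    dsimp only
    rcases min_choice (m u) J with h | h <;> rw [h] at hmt <;> linarith

end RunningInf

theorem pitman_fundamental_lemma_general
    (t : ℝ) (ht : 0 < t) (X Y : ℝ → ℝ)
    (hX : ContinuousOn X (Set.Icc 0 t)) (hY : ContinuousOn Y (Set.Icc 0 t)) :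
    sInf ((fun s => X s + sInf (Y '' Set.Icc 0 s)) '' Set.Icc 0 t)
      = sInf (X '' Set.Icc 0 t)
        + sInf ((fun s => X s - 2 * sInf (X '' Set.Icc 0 s)
            + sInf ((fun u => Y u + sInf (X '' Set.Icc 0 u)) '' Set.Icc 0 s)) ''
            Set.Icc 0 t) := by
  have hbdd : ∀ f : ℝ → ℝ, ContinuousOn f (Icc 0 t) → BddBelow (f '' Icc 0 t) :=
    fun f hf => (isCompact_Icc.image_of_continuousOn hf).bddBelow
  have hm : BddBelow (runningInf X '' Icc 0 t) :=
    ⟨runningInf X t, fun _ ⟨u, hu, hmu⟩ =>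
      hmu ▸ runningInf_le_runningInf hX hu.1 hu.2 le_rfl⟩
  have hJ : BddBelow ((fun u => sInf (X '' Icc u t)) '' Icc 0 t) :=
    ⟨runningInf X t, fun _ ⟨u, hu, hJu⟩ =>
      hJu ▸ (runningInf_eq_min hX hu.1 hu.2 le_rfl).trans_le (min_le_right _ _)⟩
  have hXm : BddBelow ((fun s => X s - 2 * runningInf X s) '' Icc 0 t) := by
    refine ⟨-X 0, ?_⟩
    rintro _ ⟨s, hs, rfl⟩
    linarith [runningInf_le hX le_rfl hs.1 hs.2, runningInf_le hX hs.1 le_rfl hs.2]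
  rw [sInf_image_add_sInf_Icc_comm ht.le (hbdd X hX) (hbdd Y hY),
    sInf_image_add_sInf_Icc_comm ht.le hXm (bddBelow_image_add (hbdd Y hY) hm)]
  have hpt : EqOn (fun u => Y u + runningInf X u
        + sInf ((fun s => X s - 2 * runningInf X s) '' Icc u t))
      (fun u => Y u + sInf (X '' Icc u t) + -runningInf X t) (Icc 0 t) := fun u hu => by
    simp only [sInf_image_sub_two_mul_runningInf hX hu.1 hu.2]
    ring
  rw [image_congr hpt,
    sInf_image_add_const (nonempty_Icc.2 ht.le) (bddBelow_image_add (hbdd Y hY) hJ)]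
  ring

/-- Lemma 2.6 of Biane–Bougerol–O'Connell: for continuous `X, Y : [0,t] → ℝ` with
`X 0 = Y 0 = 0`,
`inf_{0≤s≤t} (X s + inf_{0≤u≤s} Y u)
  = inf_{0≤s≤t} X s
    + inf_{0≤s≤t} (X s − 2 inf_{0≤u≤s} X u + inf_{0≤u≤s} (Y u + inf_{0≤v≤u} X v))`. -/
theorem pitman_fundamental_lemma
    (t : ℝ) (ht : 0 < t) (X Y : ℝ → ℝ)
    (hX : ContinuousOn X (Set.Icc 0 t)) (hY : ContinuousOn Y (Set.Icc 0 t))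
    (hX0 : X 0 = 0) (hY0 : Y 0 = 0) :
    sInf ((fun s => X s + sInf (Y '' Set.Icc 0 s)) '' Set.Icc 0 t)
      = sInf (X '' Set.Icc 0 t)
        + sInf ((fun s => X s - 2 * sInf (X '' Set.Icc 0 s)
            + sInf ((fun u => Y u + sInf (X '' Set.Icc 0 u)) '' Set.Icc 0 s)) ''
            Set.Icc 0 t) :=
  pitman_fundamental_lemma_general t ht X Y hX hY
end

section
/- Let V be a finite-dimensional real vector space with dual V∨, T > 0, and let α ∈ V, α∨ ∈ V∨ satisfy α∨(α) = 2. For every continuous path π : [0,T] → V with π(0) = 0: (i) E_α π is the unique continuous path η : [0,T] → V with η(0) = 0 satisfying η(T) = s_α( (P_α π)(T) ) and P_α η = P_α π; (ii) E_α π is the unique continuous path η with η(0) = 0 satisfying P_α η = P_α π and η α-codominant; (iii) if π is α-dominant, then E_α π is the unique continuous path η with η(0) = 0 satisfying P_α η = π and η(T) = s_α(π(T)); (iv) E_α π = π if and only if π is α-codominant. -/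
/-- The co-Pitman transform `E_α = κ ∘ P_α ∘ κ` on paths on `[0,T]`:
`E_α π (t) = π t − (inf_{t ≤ s ≤ T} α∨(π s)) • α + (inf_{0 ≤ s ≤ T} α∨(π s)) • α`. -/
noncomputable def copitman {V : Type*} [AddCommGroup V] [Module ℝ V]
    (T : ℝ) (α : V) (αv : Module.Dual ℝ V) (π : ℝ → V) : ℝ → V :=
  fun t => π t - sInf ((fun s => αv (π s)) '' Set.Icc t T) • α
            + sInf ((fun s => αv (π s)) '' Set.Icc 0 T) • α

/-!
Write `f = α∨ ∘ π`, `m t = inf_{[0,t]} f` and `M t = inf_{[t,T]} f`. Along `E_α π` the functional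
`α∨` equals `f - 2 M + 2 m T`, and the running infimum of `f - 2 M` up to time `t` is
`max (m t) (M t) - 2 M t`, attained at the last time before `t` at which `f ≤ max (m t) (M t)`;
this gives `P_α E_α π = P_α π`.

Conversely, a path `η` is recovered from `p = P_α η` and its endpoint: the running infimum `r` of
`α∨ ∘ η` solves `r t = inf_{[0,t]} (α∨ ∘ p + 2 r)`, and the only continuous solution is
`r t = max (r T) (-inf_{[t,T]} α∨ ∘ p)`, because `r` can only decrease at times where
`α∨ ∘ p = -r`. So `E_α π` is the only path with its Pitman transform and its endpoint, and the
other characterizations reduce to computing endpoints.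
-/

open Set

section RunningInfimum

variable {f : ℝ → ℝ} {a b : ℝ}

theorem continuous_sInf_image_Icc {X : Type*} [TopologicalSpace X] {g : ℝ → ℝ}
    (hg : Continuous g) {c d : X → ℝ} (hc : Continuous c) (hd : Continuous d)
    (hcd : ∀ x, c x ≤ d x) : Continuous fun x => sInf (g '' Icc (c x) (d x)) := by
  have hseg : ∀ x, g '' Icc (c x) (d x)
      = (fun u => g (u * (d x - c x) + c x)) '' Icc (0 : ℝ) 1 := fun x => by
    rw [← segment_eq_Icc (hcd x), segment_eq_image_lineMap, image_image]
    simp only [AffineMap.lineMap_apply_ring']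
  simp_rw [hseg]
  exact isCompact_Icc.continuous_sInf (f := fun x u => g (u * (d x - c x) + c x)) (by fun_prop)

theorem ContinuousOn.exists_continuous_eqOn (hf : ContinuousOn f (Icc a b)) (hab : a ≤ b) :
    ∃ g : ℝ → ℝ, Continuous g ∧ EqOn g f (Icc a b) :=
  ⟨IccExtend hab ((Icc a b).domRestrict f),
    (continuousOn_iff_continuous_domRestrict.1 hf).Icc_extend',
    fun _ hx => IccExtend_of_mem hab _ hx⟩

theorem ContinuousOn.sInf_image_Icc_left (hf : ContinuousOn f (Icc a b)) :
    ContinuousOn (fun t => sInf (f '' Icc a t)) (Icc a b) := by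
  rcases lt_or_ge b a with hba | hab
  · simp [Icc_eq_empty_of_lt hba]
  obtain ⟨g, hg, hgf⟩ := hf.exists_continuous_eqOn hab
  rw [continuousOn_iff_continuous_domRestrict]
  refine (continuous_sInf_image_Icc hg continuous_const continuous_subtype_val
    fun t : Icc a b => t.2.1).congr fun t => congrArg sInf (image_congr fun s hs => ?_)
  exact hgf ⟨hs.1, hs.2.trans t.2.2⟩

theorem ContinuousOn.sInf_image_Icc_right (hf : ContinuousOn f (Icc a b)) :
    ContinuousOn (fun t => sInf (f '' Icc t b)) (Icc a b) := by
  rcases lt_or_ge b a with hba | hab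
  · simp [Icc_eq_empty_of_lt hba]
  obtain ⟨g, hg, hgf⟩ := hf.exists_continuous_eqOn hab
  rw [continuousOn_iff_continuous_domRestrict]
  refine (continuous_sInf_image_Icc hg continuous_subtype_val continuous_const
    fun t : Icc a b => t.2.2).congr fun t => congrArg sInf (image_congr fun s hs => ?_)
  exact hgf ⟨t.2.1.trans hs.1, hs.2⟩

theorem ContinuousOn.le_of_forall_Ioc_le {θ q : ℝ} (hf : ContinuousOn f (Icc a b))
    (hq : q ∈ Ico a b) (h : ∀ s ∈ Ioc q b, θ ≤ f s) : θ ≤ f q := by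
  have hC : IsClosed (Icc a b ∩ f ⁻¹' Ici θ) :=
    hf.preimage_isClosed_of_isClosed isClosed_Icc isClosed_Ici
  have hsub : Icc q b ⊆ Icc a b ∩ f ⁻¹' Ici θ := by
    rw [← closure_Ioc hq.2.ne]
    exact closure_minimal (fun s hs => ⟨⟨hq.1.trans hs.1.le, hs.2⟩, h s hs⟩) hC
  exact (hsub ⟨le_rfl, hq.2.le⟩).2

theorem ContinuousOn.exists_eq_forall_Ioc_lt {θ : ℝ} (hf : ContinuousOn f (Icc a b))
    (hlow : ∃ s ∈ Icc a b, f s ≤ θ) (hb : θ ≤ f b) :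
    ∃ q ∈ Icc a b, f q = θ ∧ ∀ s ∈ Ioc q b, θ < f s := by
  set S := Icc a b ∩ f ⁻¹' Iic θ
  have hSbdd : BddAbove S := ⟨b, fun s hs => hs.1.2⟩
  obtain ⟨hq, hfq⟩ : sSup S ∈ S :=
    (hf.preimage_isClosed_of_isClosed isClosed_Icc isClosed_Iic).csSup_mem hlow hSbdd
  have hlt : ∀ s ∈ Ioc (sSup S) b, θ < f s := fun s hs => not_le.1 fun hle =>
    hs.1.not_ge (le_csSup hSbdd ⟨⟨hq.1.trans hs.1.le, hs.2⟩, hle⟩)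
  refine ⟨sSup S, hq, le_antisymm hfq ?_, hlt⟩
  rcases hq.2.eq_or_lt with heq | hqb
  · rwa [heq]
  · exact hf.le_of_forall_Ioc_le ⟨hq.1, hqb⟩ fun s hs => (hlt s hs).le

theorem ContinuousOn.sInf_image_Icc_eq_min {t : ℝ} (hf : ContinuousOn f (Icc a b))
    (ht : t ∈ Icc a b) :
    sInf (f '' Icc a b) = min (sInf (f '' Icc a t)) (sInf (f '' Icc t b)) := by
  rw [← Icc_union_Icc_eq_Icc ht.1 ht.2, image_union]
  exact csInf_union
    (isCompact_Icc.image_of_continuousOn (hf.mono (Icc_subset_Icc le_rfl ht.2))).bddBelow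
    ((nonempty_Icc.2 ht.1).image f)
    (isCompact_Icc.image_of_continuousOn (hf.mono (Icc_subset_Icc ht.1 le_rfl))).bddBelow
    ((nonempty_Icc.2 ht.2).image f)

theorem ContinuousOn.sInf_image_Icc_sub_two_mul_sInf {t : ℝ} (hf : ContinuousOn f (Icc a b))
    (ht : t ∈ Icc a b) (k : ℝ) :
    sInf ((fun s => f s - 2 * sInf (f '' Icc s b) + k) '' Icc a t)
      = max (sInf (f '' Icc a t)) (sInf (f '' Icc t b)) - 2 * sInf (f '' Icc t b) + k := by
  obtain ⟨hat, htb⟩ := ht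
  set M := fun s => sInf (f '' Icc s b)
  have hfat : ContinuousOn f (Icc a t) := hf.mono (Icc_subset_Icc le_rfl htb)
  have hftb : ContinuousOn f (Icc t b) := hf.mono (Icc_subset_Icc hat le_rfl)
  have hfsb : ∀ s ∈ Icc a t, ContinuousOn f (Icc s b) := fun s hs =>
    hf.mono (Icc_subset_Icc hs.1 le_rfl)
  have hM_eq : ∀ s ∈ Icc a t, M s = min (sInf (f '' Icc s t)) (M t) := fun s hs =>
    (hfsb s hs).sInf_image_Icc_eq_min ⟨hs.2, htb⟩
  refine IsLeast.csInf_eq ⟨?_, ?_⟩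
  · obtain ⟨s₀, hs₀, hfs₀⟩ := (isCompact_Icc.image_of_continuousOn hfat).sInf_mem
      ((nonempty_Icc.2 hat).image f)
    obtain ⟨q, hq, hfq, hlt⟩ := hfat.exists_eq_forall_Ioc_lt
      (θ := max (sInf (f '' Icc a t)) (M t)) ⟨s₀, hs₀, hfs₀.le.trans (le_max_left _ _)⟩
      (max_le (hfat.sInf_image_Icc_le ⟨hat, le_rfl⟩) (hftb.sInf_image_Icc_le ⟨le_rfl, htb⟩))
    have hMq : M q = M t := by
      refine (hM_eq q hq).trans (min_eq_right (le_csInf ((nonempty_Icc.2 hq.2).image f) ?_))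
      rintro _ ⟨s, hs, rfl⟩
      rcases hs.1.eq_or_lt with rfl | hqs
      · exact hfq.ge.trans' (le_max_right _ _)
      · exact (le_max_right _ _).trans (hlt s ⟨hqs, hs.2⟩).le
    exact ⟨q, hq, by simp only [M] at hMq ⊢; rw [hMq, hfq]⟩
  · rintro _ ⟨s, hs, rfl⟩
    have hm : sInf (f '' Icc a t) ≤ f s := hfat.sInf_image_Icc_le hs
    have hMs : M s ≤ f s := (hfsb s hs).sInf_image_Icc_le ⟨le_rfl, hs.2.trans htb⟩
    have hMst : M s ≤ M t := (hM_eq s hs).le.trans (min_le_right _ _)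
    have : max (sInf (f '' Icc a t)) (M t) ≤ f s - 2 * M s + 2 * M t :=
      max_le (by linarith) (by linarith)
    simp only [M] at this ⊢
    linarith

theorem ContinuousOn.eq_max_of_eq_sInf_image_Icc {l r : ℝ → ℝ} (hl : ContinuousOn l (Icc a b))
    (hr : ContinuousOn r (Icc a b))
    (hfix : ∀ t ∈ Icc a b, r t = sInf ((fun s => l s + 2 * r s) '' Icc a t)) :
    ∀ t ∈ Icc a b, r t = max (r b) (-sInf (l '' Icc t b)) := by
  intro t ht
  set F := fun s => l s + 2 * r s
  have hF : ContinuousOn F (Icc a b) := hl.add (continuousOn_const.mul hr)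
  have hr_le : ∀ s ∈ Icc a b, ∀ v ∈ Icc a s, r s ≤ F v := fun s hs v hv =>
    (hfix s hs).trans_le ((hF.mono (Icc_subset_Icc le_rfl hs.2)).sInf_image_Icc_le hv)
  have hanti : ∀ s ∈ Icc a b, ∀ s' ∈ Icc a b, s ≤ s' → r s' ≤ r s := fun s hs s' hs' hss' =>
    (hfix s hs).symm ▸ le_csInf ((nonempty_Icc.2 hs.1).image F) (by
      rintro _ ⟨v, hv, rfl⟩; exact hr_le s' hs' v ⟨hv.1, hv.2.trans hss'⟩)
  have htb : Icc t b ⊆ Icc a b := Icc_subset_Icc ht.1 le_rfl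
  have hb : b ∈ Icc a b := ⟨ht.1.trans ht.2, le_rfl⟩
  refine le_antisymm ?_ (max_le (hanti t ht b hb ht.2) ?_)
  · by_contra! hgt
    obtain ⟨hrb, hlt⟩ := max_lt_iff.1 hgt
    obtain ⟨u, hu, hru, hru_lt⟩ := (hr.neg.mono htb).exists_eq_forall_Ioc_lt (θ := -r t)
      ⟨t, left_mem_Icc.2 ht.2, le_rfl⟩ (neg_le_neg (hanti t ht b hb ht.2))
    simp only [Pi.neg_apply, neg_inj, neg_lt_neg_iff] at hru hru_lt
    have hub : u < b := hu.2.lt_of_ne (by rintro rfl; linarith)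
    have hu' : u ∈ Icc a b := htb hu
    -- past `u` the infimum `r s` has dropped below `r u`, so it is attained at some `v > u`
    have hl_le : ∀ s ∈ Ioc u b, sInf (l '' Icc t b) ≤ -r s := by
      intro s hs
      have hs' : s ∈ Icc a b := ⟨hu'.1.trans hs.1.le, hs.2⟩
      obtain ⟨v, hv, hFv⟩ := (isCompact_Icc.image_of_continuousOn
        (hF.mono (Icc_subset_Icc le_rfl hs.2))).sInf_mem ((nonempty_Icc.2 hs'.1).image F)
      rw [← hfix s hs'] at hFv
      have hrs := hru_lt s hs
      have hvu : u < v := by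
        by_contra! hvu
        have := hr_le u hu' v ⟨hv.1, hvu⟩
        linarith
      have hrv : r s ≤ r v := hanti v ⟨hv.1, hv.2.trans hs.2⟩ s hs' hv.2
      have hlv : sInf (l '' Icc t b) ≤ l v :=
        (hl.mono htb).sInf_image_Icc_le ⟨hu.1.trans hvu.le, hv.2.trans hs.2⟩
      simp only [F] at hFv
      linarith
    have : sInf (l '' Icc t b) ≤ -r u := (hr.neg.mono htb).le_of_forall_Ioc_le ⟨hu.1, hub⟩ hl_le
    linarith
  · rw [neg_le]
    refine le_csInf ((nonempty_Icc.2 ht.2).image l) ?_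
    rintro _ ⟨s, hs, rfl⟩
    have h1 := hr_le s (htb hs) s ⟨(htb hs).1, le_rfl⟩
    have h2 := hanti t ht s (htb hs) hs.1
    linarith

end RunningInfimum

section Pitman

variable {V : Type*} [AddCommGroup V] [Module ℝ V] {T : ℝ} {α : V} {αv : Module.Dual ℝ V}
  {π η : ℝ → V}

theorem dual_pitman (hpair : αv α = 2) (t : ℝ) :
    αv (pitman α αv π t) = αv (π t) - 2 * sInf ((fun s => αv (π s)) '' Icc 0 t) := by
  simp only [pitman, map_sub, map_smul, smul_eq_mul, hpair]
  ring

theorem dual_copitman (hpair : αv α = 2) (t : ℝ) :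
    αv (copitman T α αv π t) = αv (π t) - 2 * sInf ((fun s => αv (π s)) '' Icc t T)
      + 2 * sInf ((fun s => αv (π s)) '' Icc 0 T) := by
  simp only [copitman, map_add, map_sub, map_smul, smul_eq_mul, hpair]
  ring

theorem copitman_zero (h0 : π 0 = 0) : copitman T α αv π 0 = 0 := by
  simp only [copitman, h0, zero_sub, neg_add_cancel]

theorem copitman_apply_right (hpair : αv α = 2) :
    copitman T α αv π T = pitman α αv π T - αv (pitman α αv π T) • α := by
  rw [dual_pitman hpair]
  simp only [copitman, pitman, Icc_self, image_singleton, csInf_singleton]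
  module

theorem pitman_eqOn_self_of_dominant (h0 : π 0 = 0) (hdom : ∀ t ∈ Icc 0 T, 0 ≤ αv (π t)) :
    EqOn (pitman α αv π) π (Icc 0 T) := fun t ht => by
  have : sInf ((fun s => αv (π s)) '' Icc 0 t) = 0 := IsLeast.csInf_eq
    ⟨⟨0, left_mem_Icc.2 ht.1, by simp [h0]⟩, by
      rintro _ ⟨s, hs, rfl⟩; exact hdom s ⟨hs.1, hs.2.trans ht.2⟩⟩
  simp only [pitman, this, zero_smul, sub_zero]

theorem apply_right_eq_of_codominant (hpair : αv α = 2) (hT : 0 ≤ T)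
    (hcod : ∀ t ∈ Icc 0 T, αv (η T) ≤ αv (η t)) :
    η T = pitman α αv η T - αv (pitman α αv η T) • α := by
  have : sInf ((fun s => αv (η s)) '' Icc 0 T) = αv (η T) := IsLeast.csInf_eq
    ⟨⟨T, right_mem_Icc.2 hT, rfl⟩, by rintro _ ⟨s, hs, rfl⟩; exact hcod s hs⟩
  rw [dual_pitman hpair]
  simp only [pitman, this]
  module

variable [TopologicalSpace V]

theorem pitman_copitman (hpair : αv α = 2) (hαv : Continuous αv)
    (hπ : ContinuousOn π (Icc 0 T)) :
    EqOn (pitman α αv (copitman T α αv π)) (pitman α αv π) (Icc 0 T) := fun t ht => by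
  have hf : ContinuousOn (fun s => αv (π s)) (Icc 0 T) := hαv.comp_continuousOn hπ
  have hinf : sInf ((fun s => αv (copitman T α αv π s)) '' Icc 0 t)
      = sInf ((fun s => αv (π s)) '' Icc 0 t) + sInf ((fun s => αv (π s)) '' Icc 0 T)
        - sInf ((fun s => αv (π s)) '' Icc t T) := by
    simp_rw [dual_copitman hpair]
    rw [hf.sInf_image_Icc_sub_two_mul_sInf ht, hf.sInf_image_Icc_eq_min ht]
    linarith [min_add_max (sInf ((fun s => αv (π s)) '' Icc 0 t))
      (sInf ((fun s => αv (π s)) '' Icc t T))]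
  unfold pitman
  rw [hinf]
  simp only [copitman]
  module

theorem copitman_codominant (hpair : αv α = 2) (hαv : Continuous αv)
    (hπ : ContinuousOn π (Icc 0 T)) :
    ∀ t ∈ Icc 0 T, αv (copitman T α αv π T) ≤ αv (copitman T α αv π t) := fun t ht => by
  have hf : ContinuousOn (fun s => αv (π s)) (Icc t T) :=
    hαv.comp_continuousOn (hπ.mono (Icc_subset_Icc ht.1 le_rfl))
  have h1 := hf.sInf_image_Icc_le ⟨le_rfl, ht.2⟩
  have h2 := hf.sInf_image_Icc_le ⟨ht.2, le_rfl⟩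
  rw [dual_copitman hpair, dual_copitman hpair, Icc_self, image_singleton, csInf_singleton]
  linarith

variable [IsTopologicalAddGroup V] [ContinuousSMul ℝ V]

theorem continuousOn_pitman (hαv : Continuous αv) (hπ : ContinuousOn π (Icc 0 T)) :
    ContinuousOn (pitman α αv π) (Icc 0 T) :=
  hπ.sub ((hαv.comp_continuousOn hπ).sInf_image_Icc_left.smul continuousOn_const)

theorem continuousOn_copitman (hαv : Continuous αv) (hπ : ContinuousOn π (Icc 0 T)) :
    ContinuousOn (copitman T α αv π) (Icc 0 T) :=
  (hπ.sub ((hαv.comp_continuousOn hπ).sInf_image_Icc_right.smul continuousOn_const)).add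
    continuousOn_const

theorem eq_pitman_add_max_smul (hpair : αv α = 2) (hαv : Continuous αv)
    (hη : ContinuousOn η (Icc 0 T)) :
    ∀ t ∈ Icc 0 T, η t = pitman α αv η t + max (sInf ((fun s => αv (η s)) '' Icc 0 T))
      (-sInf ((fun s => αv (pitman α αv η s)) '' Icc t T)) • α := fun t ht => by
  set r := fun t => sInf ((fun s => αv (η s)) '' Icc 0 t)
  have hr : ContinuousOn r (Icc 0 T) :=
    (hαv.comp_continuousOn hη (g := fun s => αv s)).sInf_image_Icc_left
  have hl : ContinuousOn (fun s => αv (pitman α αv η s)) (Icc 0 T) :=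
    hαv.comp_continuousOn (continuousOn_pitman hαv hη)
  have hfix : ∀ t ∈ Icc 0 T, r t = sInf ((fun s => αv (pitman α αv η s) + 2 * r s) '' Icc 0 t) :=
    fun t _ => congrArg sInf (image_congr fun s _ => by simp only [r, dual_pitman hpair]; ring)
  rw [← ContinuousOn.eq_max_of_eq_sInf_image_Icc hl hr hfix t ht]
  simp only [pitman, r, sub_add_cancel]

theorem eqOn_of_pitman_eqOn (hpair : αv α = 2) (hαv : Continuous αv) {η₁ η₂ : ℝ → V}
    (h₁ : ContinuousOn η₁ (Icc 0 T)) (h₂ : ContinuousOn η₂ (Icc 0 T))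
    (hp : EqOn (pitman α αv η₁) (pitman α αv η₂) (Icc 0 T)) (hT : η₁ T = η₂ T) :
    EqOn η₁ η₂ (Icc 0 T) := fun t ht => by
  have hT' : T ∈ Icc 0 T := right_mem_Icc.2 (ht.1.trans ht.2)
  have hr : sInf ((fun s => αv (η₁ s)) '' Icc 0 T) = sInf ((fun s => αv (η₂ s)) '' Icc 0 T) := by
    have := congrArg αv (hp hT')
    rw [dual_pitman hpair, dual_pitman hpair, hT] at this
    linarith
  have hl : (fun s => αv (pitman α αv η₁ s)) '' Icc t T
      = (fun s => αv (pitman α αv η₂ s)) '' Icc t T :=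
    image_congr fun s hs => by rw [hp ⟨ht.1.trans hs.1, hs.2⟩]
  rw [eq_pitman_add_max_smul hpair hαv h₁ t ht, eq_pitman_add_max_smul hpair hαv h₂ t ht,
    hp ht, hr, hl]

end Pitman

/-- Lemma 4.1 of Biane–Bougerol–O'Connell, characterizations of `E_α π`:
(i) it is the unique path `η` with `η(T) = s_α((P_α π)(T))` and `P_α η = P_α π`;
(ii) it is the unique `α`-codominant path `η` with `P_α η = P_α π`;
(iii) if `π` is `α`-dominant, it is the unique path `η` with `P_α η = π` and
`η(T) = s_α(π(T))`; (iv) `E_α π = π` iff `π` is `α`-codominant.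
Here `s_α v = v − α∨(v) α`; a path `η` is `α`-dominant if `α∨(η t) ≥ 0` on `[0,T]`
and `α`-codominant if `α∨(η t) ≥ α∨(η T)` on `[0,T]`. -/
theorem copitman_characterizations
    {V : Type*} [NormedAddCommGroup V] [NormedSpace ℝ V] [FiniteDimensional ℝ V]
    (T : ℝ) (hT : 0 < T) (α : V) (αv : Module.Dual ℝ V) (hpair : αv α = 2)
    (π : ℝ → V) (hcont : ContinuousOn π (Set.Icc 0 T)) (h0 : π 0 = 0) :
    -- `E_α π` is itself a path with the stated properties
    (ContinuousOn (copitman T α αv π) (Set.Icc 0 T) ∧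
      copitman T α αv π 0 = 0 ∧
      copitman T α αv π T
        = pitman α αv π T - αv (pitman α αv π T) • α ∧
      (∀ t ∈ Set.Icc 0 T,
        pitman α αv (copitman T α αv π) t = pitman α αv π t) ∧
      (∀ t ∈ Set.Icc 0 T,
        αv (copitman T α αv π T) ≤ αv (copitman T α αv π t))) ∧
    -- (i) uniqueness given the endpoint `s_α((P_α π)(T))`
    (∀ η : ℝ → V, ContinuousOn η (Set.Icc 0 T) → η 0 = 0 →
      η T = pitman α αv π T - αv (pitman α αv π T) • α →
      (∀ t ∈ Set.Icc 0 T, pitman α αv η t = pitman α αv π t) →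
      ∀ t ∈ Set.Icc 0 T, η t = copitman T α αv π t) ∧
    -- (ii) uniqueness given `α`-codominance
    (∀ η : ℝ → V, ContinuousOn η (Set.Icc 0 T) → η 0 = 0 →
      (∀ t ∈ Set.Icc 0 T, pitman α αv η t = pitman α αv π t) →
      (∀ t ∈ Set.Icc 0 T, αv (η T) ≤ αv (η t)) →
      ∀ t ∈ Set.Icc 0 T, η t = copitman T α αv π t) ∧
    -- (iii) for an `α`-dominant path `π`
    ((∀ t ∈ Set.Icc 0 T, 0 ≤ αv (π t)) →
      (∀ t ∈ Set.Icc 0 T, pitman α αv (copitman T α αv π) t = π t) ∧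
      copitman T α αv π T = π T - αv (π T) • α ∧
      (∀ η : ℝ → V, ContinuousOn η (Set.Icc 0 T) → η 0 = 0 →
        (∀ t ∈ Set.Icc 0 T, pitman α αv η t = π t) →
        η T = π T - αv (π T) • α →
        ∀ t ∈ Set.Icc 0 T, η t = copitman T α αv π t)) ∧
    -- (iv) fixed points of `E_α` are exactly the `α`-codominant paths
    ((∀ t ∈ Set.Icc 0 T, copitman T α αv π t = π t) ↔
      ∀ t ∈ Set.Icc 0 T, αv (π T) ≤ αv (π t)) := by
  have hαv : Continuous αv := αv.continuous_of_finiteDimensional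
  have hT' : T ∈ Icc 0 T := right_mem_Icc.2 hT.le
  have hEc : ContinuousOn (copitman T α αv π) (Icc 0 T) := continuousOn_copitman hαv hcont
  have hEp := pitman_copitman hpair hαv hcont
  have huniq : ∀ η : ℝ → V, ContinuousOn η (Icc 0 T) →
      η T = pitman α αv π T - αv (pitman α αv π T) • α →
      EqOn (pitman α αv η) (pitman α αv π) (Icc 0 T) → EqOn η (copitman T α αv π) (Icc 0 T) :=
    fun η hη hηT hηp => eqOn_of_pitman_eqOn hpair hαv hη hEc (hηp.trans hEp.symm)
      (hηT.trans (copitman_apply_right hpair).symm)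
  have huniq_codom : ∀ η : ℝ → V, ContinuousOn η (Icc 0 T) →
      EqOn (pitman α αv η) (pitman α αv π) (Icc 0 T) →
      (∀ t ∈ Icc 0 T, αv (η T) ≤ αv (η t)) → EqOn η (copitman T α αv π) (Icc 0 T) :=
    fun η hη hηp hcod => huniq η hη
      (by rw [← hηp hT']; exact apply_right_eq_of_codominant hpair hT.le hcod) hηp
  refine ⟨⟨hEc, copitman_zero h0, copitman_apply_right hpair, hEp,
      copitman_codominant hpair hαv hcont⟩, fun η hη _ => huniq η hη,
    fun η hη _ => huniq_codom η hη, fun hdom => ?_, fun hfix t ht => ?_,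
    fun hcod t ht => (huniq_codom π hcont (fun _ _ => rfl) hcod ht).symm⟩
  · have hP := pitman_eqOn_self_of_dominant (α := α) h0 hdom
    refine ⟨hEp.trans hP, by rw [copitman_apply_right hpair, hP hT'], fun η hη _ hηp hηT =>
      huniq η hη (by rwa [hP hT']) (EqOn.trans hηp hP.symm)⟩
  · rw [← hfix T hT', ← hfix t ht]
    exact copitman_codominant hpair hαv hcont t ht
end

section
/- Let F, G, H : [0,∞) → (0,∞) be continuous and set I(u) = ∫_0^u G(r)/H(r) dr. Then for all t > 0: ∫_0^t ∫_0^s F(r) · (G(s)/G(r)) · (H(t)/H(s)) dr ds = ∫_0^t ∫_0^s F(r) · (I(r)/I(s)) · (G(s)/G(r)) · (I(t)/I(s)) · (H(t)/H(s)) dr ds. Equivalently, the double integral of F(r) G̃(s)/G̃(r) · H̃(t)/H̃(s) over 0 ≤ r ≤ s ≤ t equals that of F(r) G(s)/G(r) · H(t)/H(s), where G̃(s) = I(s)^{-1} G(s) and H̃(s) = I(s) H(s). -/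
/-!
Put `f = F / G`, `g = G / H` and let `A`, `I`, `B` be the primitives from `0` of `f`, `g`, `f * I`.
After pulling out the factors that do not depend on the inner variable, the left side is
`H t * ∫₀ᵗ g A`, which integration by parts turns into `H t * (A t * I t - B t)`. The right side is
`H t * I t * ∫₀ᵗ g B / I²`, and since `(A - B / I)' = g B / I²` it equals
`H t * I t * (A t - B t / I t)`, the same number. The only delicate point is the singularity
at `0`, where `B / I` tends to `0` because `0 ≤ B / I ≤ A`.
-/

open Set MeasureTheory intervalIntegral Filter Topology

namespace ContinuousOn

variable {f : ℝ → ℝ} {a b : ℝ}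

theorem intervalIntegrable_of_mem_Icc (hf : ContinuousOn f (Icc a b)) {x : ℝ}
    (hx : x ∈ Icc a b) :
    IntervalIntegrable f volume a x :=
  (hf.mono (Icc_subset_Icc_right hx.2)).intervalIntegrable_of_Icc hx.1

theorem continuousOn_primitive (hf : ContinuousOn f (Icc a b)) :
    ContinuousOn (fun x => ∫ y in a..x, f y) (Icc a b) := by
  rcases le_or_gt a b with hab | hab
  · rw [← uIcc_of_le hab] at hf ⊢
    exact continuousOn_primitive_interval hf.integrableOn_Icc
  · simp [Icc_eq_empty_of_lt hab]

theorem hasDerivAt_primitive (hf : ContinuousOn f (Icc a b)) {x : ℝ} (hx : x ∈ Ioo a b) :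
    HasDerivAt (fun x => ∫ y in a..x, f y) (f x) x :=
  integral_hasDerivAt_right
    (hf.intervalIntegrable_of_mem_Icc (Ioo_subset_Icc_self hx))
    ((hf.mono Ioo_subset_Icc_self).stronglyMeasurableAtFilter isOpen_Ioo x hx)
    (hf.continuousAt (Icc_mem_nhds hx.1 hx.2))

theorem primitive_pos (hf : ContinuousOn f (Icc a b)) (hf0 : ∀ x ∈ Icc a b, 0 < f x) {x : ℝ}
    (hx : x ∈ Ioc a b) : 0 < ∫ y in a..x, f y :=
  intervalIntegral_pos_of_pos_on (hf.intervalIntegrable_of_mem_Icc (Ioc_subset_Icc_self hx))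
    (fun y hy => hf0 y ⟨hy.1.le, hy.2.le.trans hx.2⟩) hx.1

theorem monotoneOn_primitive (hf : ContinuousOn f (Icc a b)) (hf0 : ∀ x ∈ Icc a b, 0 ≤ f x) :
    MonotoneOn (fun x => ∫ y in a..x, f y) (Icc a b) := fun _ hx _ hy hxy =>
  integral_mono_interval le_rfl hx.1 hxy
    (ae_restrict_of_forall_mem measurableSet_Ioc fun z hz => hf0 z ⟨hz.1.le, hz.2.trans hy.2⟩)
    (hf.intervalIntegrable_of_mem_Icc hy)

end ContinuousOn

section Primitives

variable {f g : ℝ → ℝ} {a b : ℝ}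

theorem primitive_nonneg (hf0 : ∀ x ∈ Icc a b, 0 ≤ f x) {x : ℝ} (hx : x ∈ Icc a b) :
    0 ≤ ∫ y in a..x, f y :=
  integral_nonneg hx.1 fun y hy => hf0 y ⟨hy.1, hy.2.trans hx.2⟩

theorem integral_primitive_mul (hf : ContinuousOn f (Icc a b)) (hg : ContinuousOn g (Icc a b))
    (hab : a ≤ b) :
    ∫ x in a..b, (∫ y in a..x, f y) * g x
      = (∫ x in a..b, f x) * (∫ x in a..b, g x) - ∫ x in a..b, f x * ∫ y in a..x, g y := by
  have key := integral_mul_deriv_eq_deriv_mul_of_hasDerivAt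
    (u := fun x => ∫ y in a..x, f y) (v := fun x => ∫ y in a..x, g y)
    (by rw [uIcc_of_le hab]; exact hf.continuousOn_primitive)
    (by rw [uIcc_of_le hab]; exact hg.continuousOn_primitive)
    (fun x hx => hf.hasDerivAt_primitive (by simpa [hab] using hx))
    (fun x hx => hg.hasDerivAt_primitive (by simpa [hab] using hx))
    (hf.intervalIntegrable_of_Icc hab) (hg.intervalIntegrable_of_Icc hab)
  simpa only [integral_same, zero_mul, sub_zero] using key

theorem primitive_mul_primitive_le (hf : ContinuousOn f (Icc a b))
    (hg : ContinuousOn g (Icc a b)) (hf0 : ∀ x ∈ Icc a b, 0 ≤ f x)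
    (hg0 : ∀ x ∈ Icc a b, 0 ≤ g x) {x : ℝ} (hx : x ∈ Icc a b) :
    ∫ y in a..x, f y * ∫ z in a..y, g z ≤ (∫ y in a..x, f y) * ∫ y in a..x, g y := by
  rw [← intervalIntegral.integral_mul_const]
  have hsub : Icc a x ⊆ Icc a b := Icc_subset_Icc_right hx.2
  refine integral_mono_on hx.1
    ((hf.mul hg.continuousOn_primitive).intervalIntegrable_of_mem_Icc hx)
    ((hf.intervalIntegrable_of_mem_Icc hx).mul_const _) fun y hy => ?_
  exact mul_le_mul_of_nonneg_left (hg.monotoneOn_primitive hg0 (hsub hy) hx hy.2) (hf0 y (hsub hy))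

theorem continuousOn_primitive_mul_primitive_div (hf : ContinuousOn f (Icc a b))
    (hg : ContinuousOn g (Icc a b)) (hf0 : ∀ x ∈ Icc a b, 0 ≤ f x)
    (hg0 : ∀ x ∈ Icc a b, 0 < g x) :
    ContinuousOn (fun x => (∫ y in a..x, f y * ∫ z in a..y, g z) / ∫ y in a..x, g y)
      (Icc a b) := by
  have hg0' : ∀ x ∈ Icc a b, 0 ≤ g x := fun x hx => (hg0 x hx).le
  have hfI0 : ∀ x ∈ Icc a b, 0 ≤ f x * ∫ y in a..x, g y := fun x hx =>
    mul_nonneg (hf0 x hx) (primitive_nonneg hg0' hx)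
  intro x hx
  obtain rfl | hax := hx.1.eq_or_lt
  -- At `a` the quotient is `0 / 0 = 0`, which is also its limit: it is squeezed by `0 ≤ · ≤ ∫ f`.
  · have hA : Tendsto (fun x => ∫ y in a..x, f y) (𝓝[Icc a b] a) (𝓝 0) := by
      simpa [ContinuousWithinAt] using hf.continuousOn_primitive a hx
    rw [ContinuousWithinAt, integral_same, zero_div]
    refine squeeze_zero' ?_ ?_ hA
    · filter_upwards [self_mem_nhdsWithin] with y hy
      exact div_nonneg (primitive_nonneg hfI0 hy) (primitive_nonneg hg0' hy)
    · filter_upwards [self_mem_nhdsWithin] with y hy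
      exact div_le_of_le_mul₀ (primitive_nonneg hg0' hy) (primitive_nonneg hf0 hy)
        (primitive_mul_primitive_le hf hg hf0 hg0' hy)
  · exact ((hf.mul hg.continuousOn_primitive).continuousOn_primitive x hx).div
      (hg.continuousOn_primitive x hx) (hg.primitive_pos hg0 ⟨hax, hx.2⟩).ne'

theorem integral_div_primitive_sq_mul (hf : ContinuousOn f (Icc a b))
    (hg : ContinuousOn g (Icc a b)) (hf0 : ∀ x ∈ Icc a b, 0 ≤ f x)
    (hg0 : ∀ x ∈ Icc a b, 0 < g x) (hab : a < b) :
    ∫ x in a..b, g x / (∫ y in a..x, g y) ^ 2 * ∫ y in a..x, f y * ∫ z in a..y, g z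
      = (∫ x in a..b, f x) - (∫ x in a..b, f x * ∫ y in a..x, g y) / ∫ x in a..b, g x := by
  set A := fun x => ∫ y in a..x, f y
  set I := fun x => ∫ y in a..x, g y
  set B := fun x => ∫ y in a..x, f y * I y
  have hfI0 : ∀ x ∈ Icc a b, 0 ≤ f x * I x := fun x hx =>
    mul_nonneg (hf0 x hx) (primitive_nonneg (fun y hy => (hg0 y hy).le) hx)
  have hW : ContinuousOn (fun x => A x - B x / I x) (Icc a b) :=
    hf.continuousOn_primitive.sub (continuousOn_primitive_mul_primitive_div hf hg hf0 hg0)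
  have hW' : ∀ x ∈ Ioo a b, HasDerivAt (fun x => A x - B x / I x) (g x / I x ^ 2 * B x) x := by
    intro x hx
    have hA' : HasDerivAt A (f x) x := hf.hasDerivAt_primitive hx
    have hI' : HasDerivAt I (g x) x := hg.hasDerivAt_primitive hx
    have hB' : HasDerivAt B (f x * I x) x :=
      (hf.mul hg.continuousOn_primitive).hasDerivAt_primitive hx
    have hIx : I x ≠ 0 := (hg.primitive_pos hg0 (Ioo_subset_Ioc_self hx)).ne'
    refine (hA'.sub (hB'.div hI' hIx)).congr_deriv ?_
    field_simp
    ring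
  have hW'0 : ∀ x ∈ Ioo a b, 0 ≤ g x / I x ^ 2 * B x := fun x hx =>
    mul_nonneg (div_nonneg (hg0 x (Ioo_subset_Icc_self hx)).le (sq_nonneg _))
      (primitive_nonneg hfI0 (Ioo_subset_Icc_self hx))
  -- `A - B / I` is an antiderivative; its derivative is nonnegative, which makes the integrand
  -- integrable in spite of the singularity of `1 / I ^ 2` at `a`.
  rw [integral_eq_sub_of_hasDerivAt_of_le hab.le hW hW'
    ((intervalIntegrable_iff_integrableOn_Ioc_of_le hab.le).2
      (integrableOn_deriv_of_nonneg hW hW' hW'0))]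
  simp [A, B, I]

end Primitives

open intervalIntegral in
/-- The integral identity (3.7) of Biane–Bougerol–O'Connell (braid relation for the
transformations `𝒯` in type `A₂`): for strictly positive continuous `F, G, H` on
`[0,∞)` and `I(u) = ∫₀ᵘ G/H`, the double integral over `0 ≤ r ≤ s ≤ t` of
`F(r)·(G(s)/G(r))·(H(t)/H(s))` equals that of
`F(r)·(G̃(s)/G̃(r))·(H̃(t)/H̃(s))`, where `G̃ = I⁻¹·G` and `H̃ = I·H`. -/
theorem braid_integral_identity
    (F G H : ℝ → ℝ)
    (hF : ContinuousOn F (Set.Ici 0)) (hG : ContinuousOn G (Set.Ici 0))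
    (hH : ContinuousOn H (Set.Ici 0))
    (hFpos : ∀ x ∈ Set.Ici (0 : ℝ), 0 < F x)
    (hGpos : ∀ x ∈ Set.Ici (0 : ℝ), 0 < G x)
    (hHpos : ∀ x ∈ Set.Ici (0 : ℝ), 0 < H x)
    (t : ℝ) (ht : 0 < t) :
    (∫ s in (0:ℝ)..t, ∫ r in (0:ℝ)..s,
        F r * (G s / G r) * (H t / H s))
      = ∫ s in (0:ℝ)..t, ∫ r in (0:ℝ)..s,
          F r * ((∫ u in (0:ℝ)..r, G u / H u) / (∫ u in (0:ℝ)..s, G u / H u))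
            * (G s / G r)
            * ((∫ u in (0:ℝ)..t, G u / H u) / (∫ u in (0:ℝ)..s, G u / H u))
            * (H t / H s) := by
  have hsub : Icc 0 t ⊆ Ici 0 := Icc_subset_Ici_self
  have hf : ContinuousOn (fun r => F r / G r) (Icc 0 t) :=
    (hF.mono hsub).div (hG.mono hsub) fun x hx => (hGpos x (hsub hx)).ne'
  have hg : ContinuousOn (fun r => G r / H r) (Icc 0 t) :=
    (hG.mono hsub).div (hH.mono hsub) fun x hx => (hHpos x (hsub hx)).ne'
  have hf0 : ∀ x ∈ Icc 0 t, 0 ≤ F x / G x := fun x hx =>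
    (div_pos (hFpos x (hsub hx)) (hGpos x (hsub hx))).le
  have hg0 : ∀ x ∈ Icc 0 t, 0 < G x / H x := fun x hx =>
    div_pos (hGpos x (hsub hx)) (hHpos x (hsub hx))
  have hI : (∫ u in (0:ℝ)..t, G u / H u) ≠ 0 := (hg.primitive_pos hg0 ⟨ht, le_rfl⟩).ne'
  calc _ = ∫ s in (0:ℝ)..t, ∫ r in (0:ℝ)..s, H t * (F r / G r * (G s / H s)) :=
        integral_congr fun s _ => integral_congr fun r _ => by ring
    _ = H t * ((∫ s in (0:ℝ)..t, F s / G s) * (∫ s in (0:ℝ)..t, G s / H s)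
          - ∫ s in (0:ℝ)..t, F s / G s * ∫ u in (0:ℝ)..s, G u / H u) := by
        simp only [intervalIntegral.integral_const_mul, intervalIntegral.integral_mul_const]
        rw [integral_primitive_mul hf hg ht.le]
    _ = H t * (∫ u in (0:ℝ)..t, G u / H u) * ((∫ s in (0:ℝ)..t, F s / G s)
          - (∫ s in (0:ℝ)..t, F s / G s * ∫ u in (0:ℝ)..s, G u / H u)
            / ∫ u in (0:ℝ)..t, G u / H u) := by
        field_simp
    _ = ∫ s in (0:ℝ)..t, ∫ r in (0:ℝ)..s, H t * (∫ u in (0:ℝ)..t, G u / H u)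
          * (G s / H s / (∫ u in (0:ℝ)..s, G u / H u) ^ 2
            * (F r / G r * ∫ u in (0:ℝ)..r, G u / H u)) := by
        simp only [intervalIntegral.integral_const_mul]
        rw [integral_div_primitive_sq_mul hf hg hf0 hg0 ht]
    _ = _ := integral_congr fun s _ => integral_congr fun r _ => by ring
end
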